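/- arXiv:2408.02347 — 7 statements merged into one kernel-verified Lean document; each statement's English description precedes it below -/
import Mathlib

section
/- For all p ∈ [0,1] and q ∈ (0,1), χ²(p,q) ≥ (1/12) · kl(p,q) / log max{1/q, 1/(1−q)}, where χ²(p,q) = (p−q)²/((p+q)(2−(p+q))) and kl is the Bernoulli KL-divergence. -/
/-- Symmetric chi-square divergence of `Ber p` and `Ber q`. -/
noncomputable def chiSq (p q : ℝ) : ℝ := (p - q) ^ 2 / ((p + q) * (2 - (p + q)))

/-- Bernoulli KL-divergence with base-2 logarithm. -/
noncomputable def klBer2 (p q : ℝ) : ℝ :=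
  p * Real.logb 2 (p / q) + (1 - p) * Real.logb 2 ((1 - p) / (1 - q))

/-- Natural-log Bernoulli KL. -/
noncomputable def klNat (p q : ℝ) : ℝ :=
  p * Real.log (p / q) + (1 - p) * Real.log ((1 - p) / (1 - q))

lemma term_le (a b : ℝ) (ha : 0 ≤ a) (hb : 0 < b) :
    a * Real.log (a / b) ≤ a * (a - b) / b := by
  rcases eq_or_lt_of_le ha with h | h
  · simp [← h]
  · have hx : 0 < a / b := div_pos h hb
    have h1 := Real.log_le_sub_one_of_pos hx
    have h2 : a * Real.log (a / b) ≤ a * (a / b - 1) := by nlinarith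
    calc a * Real.log (a / b) ≤ a * (a / b - 1) := h2
      _ = a * (a - b) / b := by field_simp

lemma pearson (p q : ℝ) (hp0 : 0 ≤ p) (hp1 : p ≤ 1) (hq0 : 0 < q) (hq1 : q < 1) :
    klNat p q ≤ (p - q) ^ 2 / (q * (1 - q)) := by
  have h1 := term_le p q hp0 hq0
  have h2 := term_le (1 - p) (1 - q) (by linarith) (by linarith)
  have hqne : q ≠ 0 := hq0.ne'
  have hqne2 : (1 : ℝ) - q ≠ 0 := by linarith
  have key : p * (p - q) / q + (1 - p) * ((1 - p) - (1 - q)) / (1 - q)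
      = (p - q) ^ 2 / (q * (1 - q)) := by
    field_simp
    ring
  unfold klNat
  linarith [h1, h2]

lemma klNat_symm (p q : ℝ) : klNat (1 - p) (1 - q) = klNat p q := by
  unfold klNat
  simp only [sub_sub_cancel]
  ring

lemma chiSq_symm (p q : ℝ) : chiSq (1 - p) (1 - q) = chiSq p q := by
  unfold chiSq
  rw [show (1 - p - (1 - q)) ^ 2 = (p - q) ^ 2 by ring,
      show (1 - p + (1 - q)) * (2 - (1 - p + (1 - q))) = (p + q) * (2 - (p + q)) by ring]

lemma core (p q : ℝ) (hp0 : 0 ≤ p) (hp1 : p ≤ 1) (hq0 : 0 < q) (hq2 : q ≤ 1 / 2) :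
    klNat p q ≤ 12 * Real.log (1 / q) * chiSq p q := by
  have hq1 : q < 1 := by linarith
  have hlog : 1 - q ≤ Real.log (1 / q) := by
    have h := Real.log_le_sub_one_of_pos hq0
    rw [one_div, Real.log_inv]
    linarith
  have hs0 : 0 < p + q := by linarith
  have hs2 : p + q < 2 := by linarith
  have hD : 0 < (p + q) * (2 - (p + q)) := mul_pos hs0 (by linarith)
  have hL0 : 0 < Real.log (1 / q) := by linarith
  by_cases hcase : p ≤ 2 * q
  · -- near case: Pearson bound suffices
    have hP := pearson p q hp0 hp1 hq0 hq1
    have hpoly : (p + q) * (2 - (p + q)) ≤ 12 * q * (1 - q) ^ 2 := by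
      nlinarith [sq_nonneg (p - q), sq_nonneg (p + q - 1), mul_nonneg hp0 hq0.le,
        sq_nonneg (1 - 2 * q), mul_nonneg (mul_nonneg hq0.le hq0.le) hq0.le,
        mul_nonneg hq0.le (sub_nonneg.2 hcase), sq_nonneg (p - 2 * q),
        mul_nonneg (sub_nonneg.2 hcase) (sub_nonneg.2 hq2)]
    have hqq0 : 0 < q * (1 - q) := mul_pos hq0 (by linarith)
    have hstep : (p - q) ^ 2 / (q * (1 - q))
        ≤ 12 * Real.log (1 / q) * chiSq p q := by
      unfold chiSq
      rw [← mul_div_assoc, div_le_div_iff₀ hqq0 hD]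
      have hqq : 0 ≤ 12 * q * (1 - q) * (p - q) ^ 2 := by nlinarith [sq_nonneg (p - q)]
      nlinarith [mul_le_mul_of_nonneg_left hpoly (sq_nonneg (p - q)),
        mul_le_mul_of_nonneg_right hlog hqq]
    linarith
  · -- far case: p > 2q
    push_neg at hcase
    have hp : 0 < p := by linarith
    have ht1 : p * Real.log (p / q) ≤ p * Real.log (1 / q) := by
      have h : Real.log (p / q) ≤ Real.log (1 / q) := by
        apply Real.log_le_log (by positivity)
        exact (div_le_div_iff_of_pos_right hq0).mpr hp1
      nlinarith
    have ht2 : (1 - p) * Real.log ((1 - p) / (1 - q)) ≤ 0 := by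
      apply mul_nonpos_of_nonneg_of_nonpos (by linarith)
      apply Real.log_nonpos (div_nonneg (by linarith) (by linarith))
      rw [div_le_one (by linarith)]
      linarith
    have hkl : klNat p q ≤ p * Real.log (1 / q) := by
      unfold klNat; linarith
    have hmain : p * Real.log (1 / q) ≤ 12 * Real.log (1 / q) * chiSq p q := by
      unfold chiSq
      rw [← mul_div_assoc, le_div_iff₀ hD]
      have hpd : p * ((p + q) * (2 - (p + q))) ≤ 12 * (p - q) ^ 2 := by
        nlinarith [sq_nonneg (p - 2 * q), mul_pos hq0 hp]
      nlinarith [mul_le_mul_of_nonneg_left hpd hL0.le]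
    linarith

theorem stmt_1 (p q : ℝ) (hp0 : 0 ≤ p) (hp1 : p ≤ 1) (hq0 : 0 < q) (hq1 : q < 1) :
    chiSq p q ≥ (1 / 12) * klBer2 p q / Real.logb 2 (max (1 / q) (1 / (1 - q))) := by
  set M := max (1 / q) (1 / (1 - q)) with hM
  have hlog2 : 0 < Real.log 2 := Real.log_pos (by norm_num)
  have hkl : klBer2 p q = klNat p q / Real.log 2 := by
    unfold klBer2 klNat Real.logb; ring
  have hM2 : (2 : ℝ) ≤ M := by
    rcases le_or_gt q (1 / 2) with h | h
    · refine le_trans ?_ (le_max_left _ _)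
      rw [le_div_iff₀ hq0]; linarith
    · refine le_trans ?_ (le_max_right _ _)
      rw [le_div_iff₀ (by linarith)]; linarith
  have hLM : 0 < Real.log M := Real.log_pos (by linarith)
  have hkey : klNat p q ≤ 12 * Real.log M * chiSq p q := by
    rcases le_or_gt q (1 / 2) with h | h
    · have hMeq : M = 1 / q := by
        rw [hM, max_eq_left (one_div_le_one_div_of_le hq0 (by linarith))]
      rw [hMeq]
      exact core p q hp0 hp1 hq0 h
    · have hMeq : M = 1 / (1 - q) := by
        rw [hM, max_eq_right (one_div_le_one_div_of_le (by linarith) (by linarith))]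
      rw [hMeq, ← klNat_symm p q, ← chiSq_symm p q]
      exact core (1 - p) (1 - q) (by linarith) (by linarith) (by linarith) (by linarith)
  have hRW : (1 / 12) * klBer2 p q / Real.logb 2 M = klNat p q / (12 * Real.log M) := by
    rw [hkl]
    unfold Real.logb
    field_simp
  rw [ge_iff_le, hRW, div_le_iff₀ (by positivity)]
  nlinarith [hkey]
end

section
/- Let 0 < q < 1/2 and let τ, μ be distributions over {0,1}ⁿ such that for every i ∈ [n] and every w ∈ {0,1}^{i−1}, either the conditional marginals τ|_i^{x_{[i−1]}=w} and μ|_i^{x_{[i−1]}=w} are equal, or q ≤ μ|_i^{x_{[i−1]}=w}(1) ≤ 1−q. Then Δ_{χ²}(τ,μ) ≥ (1/6)·d_TV(τ,μ)² / log(1/q). -/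
/-- Total variation distance between finitely supported distributions. -/
noncomputable def tvDist {α : Type*} [Fintype α] (μ τ : α → ℝ) : ℝ :=
  (1 / 2) * ∑ x, |μ x - τ x|

/-- Probability under `ν` of the prefix event that the first `i` bits agree with `w`. -/
noncomputable def preProb (n : ℕ) (ν : (Fin n → Bool) → ℝ) (i : Fin n) (w : Fin n → Bool) : ℝ :=
  ∑ x, if (∀ j, j < i → x j = w j) then ν x else 0

/-- Conditional probability that bit `i` equals `1`, given the prefix of `w` before `i`. -/
noncomputable def condP (n : ℕ) (ν : (Fin n → Bool) → ℝ) (i : Fin n) (w : Fin n → Bool) : ℝ :=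
  (∑ x, if ((∀ j, j < i → x j = w j) ∧ x i = true) then ν x else 0) / preProb n ν i w

/-- Slice-wise chi-square divergence. -/
noncomputable def deltaChi (n : ℕ) (τ μ : (Fin n → Bool) → ℝ) : ℝ :=
  ∑ i : Fin n, ∑ w, τ w * chiSq (condP n τ i w) (condP n μ i w)

open Real Finset
open InformationTheory (klFun klFun_apply)

section CondProb

variable {α β : Type*} [Fintype α] [DecidableEq β]

def fiberMass (f : α → β) (ν : α → ℝ) (b : β) : ℝ :=
  ∑ x, if f x = b then ν x else 0

-- Equal to `0` on a fibre of mass `0`.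
noncomputable def condProb (f : α → β) (ν : α → ℝ) (P : α → Prop) [DecidablePred P] (b : β) : ℝ :=
  fiberMass f (fun x => if P x then ν x else 0) b / fiberMass f ν b

variable {f : α → β} {ν : α → ℝ}

lemma sum_mul_comp_eq_sum_fiberMass_mul [Fintype β] (w : α → ℝ) (F : β → ℝ) :
    ∑ x, w x * F (f x) = ∑ b, fiberMass f w b * F b := by
  simp only [fiberMass, sum_mul, ite_mul, zero_mul]
  rw [sum_comm]
  simp

lemma fiberMass_add (w w' : α → ℝ) (b : β) :
    fiberMass f (fun x => w x + w' x) b = fiberMass f w b + fiberMass f w' b := by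
  simp only [fiberMass, ← sum_add_distrib]
  exact sum_congr rfl fun x _ => by split_ifs <;> simp

lemma fiberMass_nonneg (hν : ∀ x, 0 ≤ ν x) (b : β) : 0 ≤ fiberMass f ν b :=
  sum_nonneg fun x _ => ite_nonneg (hν x) le_rfl

lemma fiberMass_mono {w : α → ℝ} (h : ∀ x, w x ≤ ν x) (b : β) :
    fiberMass f w b ≤ fiberMass f ν b :=
  sum_le_sum fun x _ => by split_ifs <;> simp [h x]

lemma le_fiberMass (hν : ∀ x, 0 ≤ ν x) (x : α) : ν x ≤ fiberMass f ν (f x) := by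
  simpa [fiberMass] using single_le_sum (f := fun y => if f y = f x then ν y else 0)
    (fun y _ => ite_nonneg (hν y) le_rfl) (mem_univ x)

variable (P : α → Prop) [DecidablePred P]

lemma fiberMass_ite_le (hν : ∀ x, 0 ≤ ν x) (b : β) :
    fiberMass f (fun x => if P x then ν x else 0) b ≤ fiberMass f ν b :=
  fiberMass_mono (fun x => by split_ifs <;> simp [hν x]) b

lemma condProb_nonneg (hν : ∀ x, 0 ≤ ν x) (b : β) : 0 ≤ condProb f ν P b :=
  div_nonneg (fiberMass_nonneg (fun x => ite_nonneg (hν x) le_rfl) b) (fiberMass_nonneg hν b)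

lemma condProb_le_one (hν : ∀ x, 0 ≤ ν x) (b : β) : condProb f ν P b ≤ 1 :=
  div_le_one_of_le₀ (fiberMass_ite_le P hν b) (fiberMass_nonneg hν b)

lemma condProb_mul_fiberMass (hν : ∀ x, 0 ≤ ν x) (b : β) :
    condProb f ν P b * fiberMass f ν b = fiberMass f (fun x => if P x then ν x else 0) b := by
  rcases eq_or_ne (fiberMass f ν b) 0 with h | h
  · have hle := fiberMass_ite_le (f := f) P hν b
    rw [h] at hle
    rw [h, mul_zero]
    exact (le_antisymm hle (fiberMass_nonneg (fun x => ite_nonneg (hν x) le_rfl) b)).symm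
  · exact div_mul_cancel₀ _ h

lemma one_sub_condProb_mul_fiberMass (hν : ∀ x, 0 ≤ ν x) (b : β) :
    (1 - condProb f ν P b) * fiberMass f ν b = fiberMass f (fun x => if P x then 0 else ν x) b := by
  have hsplit := fiberMass_add (f := f) (fun x => if P x then ν x else 0)
    (fun x => if P x then 0 else ν x) b
  simp only [ite_add_ite, add_zero, zero_add, ite_self] at hsplit
  rw [sub_mul, one_mul, condProb_mul_fiberMass P hν, hsplit]
  ring

/-- The tower property of conditional expectation. -/
lemma sum_mul_condProb_mul [Fintype β] (hν : ∀ x, 0 ≤ ν x) (h : β → ℝ) :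
    ∑ x, ν x * (condProb f ν P (f x) * h (f x)) = ∑ x, (if P x then ν x else 0) * h (f x) := by
  rw [sum_mul_comp_eq_sum_fiberMass_mul ν (fun b => condProb f ν P b * h b),
    sum_mul_comp_eq_sum_fiberMass_mul _ h]
  refine sum_congr rfl fun b _ => ?_
  rw [← mul_assoc, mul_comm (fiberMass f ν b), condProb_mul_fiberMass P hν]

end CondProb

section Cube

variable {n : ℕ}

-- Conditioning on the first `k` bits of `x` is conditioning on the fibre of `truncate k` at `x`.
def truncate (k : ℕ) (x : Fin n → Bool) : Fin n → Bool :=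
  fun j => if (j : ℕ) < k then x j else false

lemma truncate_eq_truncate_iff {k : ℕ} {x y : Fin n → Bool} :
    truncate k x = truncate k y ↔ ∀ j : Fin n, (j : ℕ) < k → x j = y j := by
  simp only [truncate, funext_iff]
  refine forall_congr' fun j => ?_
  by_cases h : (j : ℕ) < k <;> simp [h]

lemma preProb_eq_fiberMass (ν : (Fin n → Bool) → ℝ) (i : Fin n) (w : Fin n → Bool) :
    preProb n ν i w = fiberMass (truncate i) ν (truncate i w) := by
  simp only [preProb, fiberMass, truncate_eq_truncate_iff, Fin.lt_def]

lemma condP_eq_condProb (ν : (Fin n → Bool) → ℝ) (i : Fin n) (w : Fin n → Bool) :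
    condP n ν i w = condProb (truncate i) ν (fun x => x i = true) (truncate i w) := by
  rw [condP, preProb_eq_fiberMass]
  simp only [condProb, fiberMass, truncate_eq_truncate_iff, Fin.lt_def, ite_and]

lemma condP_update (ν : (Fin n → Bool) → ℝ) (i : Fin n) (x : Fin n → Bool) (b : Bool) :
    condP n ν i (Function.update x i b) = condP n ν i x := by
  have : truncate i (Function.update x i b) = truncate i x :=
    truncate_eq_truncate_iff.2 fun j hj => Function.update_of_ne (Fin.ne_of_lt hj) b x
  rw [condP_eq_condProb, condP_eq_condProb, this]

noncomputable def bitCond (n : ℕ) (ν : (Fin n → Bool) → ℝ) (i : Fin n) (x : Fin n → Bool) : ℝ :=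
  if x i = true then condP n ν i x else 1 - condP n ν i x

variable {ν : (Fin n → Bool) → ℝ}

lemma fiberMass_truncate_zero (x : Fin n → Bool) :
    fiberMass (truncate 0) ν (truncate 0 x) = ∑ y, ν y := by
  simp [fiberMass, truncate_eq_truncate_iff]

lemma fiberMass_truncate_self (x : Fin n → Bool) :
    fiberMass (truncate n) ν (truncate n x) = ν x := by
  simp [fiberMass, truncate_eq_truncate_iff, ← funext_iff]

lemma fiberMass_truncate_succ (hν : ∀ x, 0 ≤ ν x) (i : Fin n) (x : Fin n → Bool) :
    fiberMass (truncate (i + 1)) ν (truncate (i + 1) x) = preProb n ν i x * bitCond n ν i x := by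
  have hsplit : ∀ y, truncate (i + 1) y = truncate (i + 1) x ↔
      truncate i y = truncate i x ∧ y i = x i := by
    intro y
    simp only [truncate_eq_truncate_iff, Nat.lt_succ_iff_lt_or_eq, or_imp, forall_and,
      Fin.val_inj, forall_eq]
  rw [preProb_eq_fiberMass, bitCond, condP_eq_condProb, mul_comm]
  cases hxi : x i
  · rw [if_neg (by simp), one_sub_condProb_mul_fiberMass _ hν]
    simp only [fiberMass, hsplit, hxi, ite_and]
    exact sum_congr rfl fun y _ => by cases y i <;> simp
  · rw [if_pos rfl, condProb_mul_fiberMass _ hν]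
    simp [fiberMass, hsplit, hxi, ite_and]

end Cube

noncomputable def klBer (p q : ℝ) : ℝ := p * log (p / q) + (1 - p) * log ((1 - p) / (1 - q))

lemma mul_log_div_eq (x : ℝ) {y : ℝ} (hy : y ≠ 0) : x * log (x / y) = x * (log x - log y) := by
  rcases eq_or_ne x 0 with rfl | hx
  · simp
  · rw [log_div hx hy]

lemma klBer_eq {p q : ℝ} (hq0 : q ≠ 0) (hq1 : q ≠ 1) :
    klBer p q = p * (log p - log q) + (1 - p) * (log (1 - p) - log (1 - q)) := by
  rw [klBer, mul_log_div_eq _ hq0, mul_log_div_eq _ (sub_ne_zero.2 hq1.symm)]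

lemma klBer_self (p : ℝ) : klBer p p = 0 := by
  have h : ∀ x : ℝ, x * log (x / x) = 0 := fun x => by
    rcases eq_or_ne x 0 with rfl | hx <;> simp [*]
  simp only [klBer, h, add_zero]

lemma klBer_eq_klFun {p q : ℝ} (hq0 : 0 < q) (hq1 : q < 1) :
    klBer p q = q * klFun (p / q)
      + (1 - q) * klFun ((1 - p) / (1 - q)) := by
  have : (1 - q) ≠ 0 := by linarith
  simp only [klBer, klFun_apply]
  field_simp
  ring

lemma hasDerivAt_klBer (a : ℝ) {t : ℝ} (ht : t ∈ Set.Ioo 0 1) :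
    HasDerivAt (klBer a) ((t - a) / (t * (1 - t))) t := by
  obtain ⟨ht0, ht1⟩ := ht
  have hsub : (1 : ℝ) - t ≠ 0 := by linarith
  have hd : HasDerivAt (fun s => a * (log a - log s) + (1 - a) * (log (1 - a) - log (1 - s)))
      (a * -t⁻¹ + (1 - a) * -(-1 / (1 - t))) t :=
    (((hasDerivAt_log ht0.ne').const_sub (log a)).const_mul a).add
      (((((hasDerivAt_id t).const_sub 1).log hsub).const_sub (log (1 - a))).const_mul (1 - a))
  have heq : klBer a =ᶠ[nhds t]
      fun s => a * (log a - log s) + (1 - a) * (log (1 - a) - log (1 - s)) := by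
    filter_upwards [Ioo_mem_nhds ht0 ht1] with s hs
    exact klBer_eq hs.1.ne' hs.2.ne
  refine (hd.congr_of_eventuallyEq heq).congr_deriv ?_
  field_simp
  ring

-- `kl(a, ·) - 2 (a - ·)²` vanishes at `a`, decreases before `a` and increases after it.
lemma two_mul_sq_le_klBer_of_mem_Ioo {a b : ℝ} (ha : a ∈ Set.Ioo 0 1) (hb : b ∈ Set.Ioo 0 1) :
    2 * (a - b) ^ 2 ≤ klBer a b := by
  set G : ℝ → ℝ := fun t => klBer a t - 2 * (a - t) ^ 2
  set G' : ℝ → ℝ := fun t => (t - a) * (1 / (t * (1 - t)) - 4)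
  have hG : ∀ t ∈ Set.Ioo (0 : ℝ) 1, HasDerivAt G (G' t) t := by
    intro t ht
    have hpow := ((hasDerivAt_id t).const_sub a).pow 2
    refine ((hasDerivAt_klBer a ht).sub (hpow.const_mul 2)).congr_deriv ?_
    have : t * (1 - t) ≠ 0 := mul_ne_zero ht.1.ne' (by linarith [ht.2])
    simp only [G', id]
    field_simp
    ring
  have hG'sign : ∀ t ∈ Set.Ioo (0 : ℝ) 1, 0 ≤ 1 / (t * (1 - t)) - 4 := by
    intro t ⟨ht0, ht1⟩
    rw [sub_nonneg, le_div_iff₀ (by nlinarith)]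
    nlinarith [sq_nonneg (2 * t - 1)]
  have hcont : ContinuousOn G (Set.Ioo 0 1) := fun t ht => (hG t ht).continuousAt.continuousWithinAt
  have hsub_Ico : Set.Ico a 1 ⊆ Set.Ioo 0 1 := fun t ht => ⟨ha.1.trans_le ht.1, ht.2⟩
  have hsub_Ioc : Set.Ioc 0 a ⊆ Set.Ioo 0 1 := fun t ht => ⟨ht.1, ht.2.trans_lt ha.2⟩
  have hmono : MonotoneOn G (Set.Ico a 1) := by
    refine monotoneOn_of_hasDerivWithinAt_nonneg (f' := G') (convex_Ico a 1) (hcont.mono hsub_Ico)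
      (fun t ht => ?_) fun t ht => ?_
    · rw [interior_Ico] at ht
      exact (hG t (hsub_Ico (Set.Ioo_subset_Ico_self ht))).hasDerivWithinAt
    · rw [interior_Ico] at ht
      exact mul_nonneg (by linarith [ht.1]) (hG'sign t (hsub_Ico (Set.Ioo_subset_Ico_self ht)))
  have hanti : AntitoneOn G (Set.Ioc 0 a) := by
    refine antitoneOn_of_hasDerivWithinAt_nonpos (f' := G') (convex_Ioc 0 a) (hcont.mono hsub_Ioc)
      (fun t ht => ?_) fun t ht => ?_
    · rw [interior_Ioc] at ht
      exact (hG t (hsub_Ioc (Set.Ioo_subset_Ioc_self ht))).hasDerivWithinAt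
    · rw [interior_Ioc] at ht
      exact mul_nonpos_of_nonpos_of_nonneg (by linarith [ht.2])
        (hG'sign t (hsub_Ioc (Set.Ioo_subset_Ioc_self ht)))
  have hGab : G a ≤ G b := by
    rcases le_total a b with hab | hab
    · exact hmono ⟨le_rfl, ha.2⟩ ⟨hab, hb.2⟩ hab
    · exact hanti ⟨hb.1, hab⟩ ⟨ha.1, le_rfl⟩ hab
  simpa [G, klBer_self] using hGab

-- The endpoints `a ∈ {0, 1}` follow by continuity in `a`, as `x log x` is continuous at `0`.
lemma two_mul_sq_le_klBer {a b : ℝ} (ha : a ∈ Set.Icc 0 1) (hb : b ∈ Set.Ioo 0 1) :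
    2 * (a - b) ^ 2 ≤ klBer a b := by
  have hcont : Continuous fun a => klBer a b := by
    have : (fun a => klBer a b) = fun a =>
        a * log a - a * log b + ((1 - a) * log (1 - a) - (1 - a) * log (1 - b)) := by
      funext a
      rw [klBer_eq hb.1.ne' hb.2.ne]
      ring
    rw [this]
    fun_prop
  refine le_on_closure (fun a ha => two_mul_sq_le_klBer_of_mem_Ioo ha hb) (by fun_prop)
    hcont.continuousOn ?_
  rwa [closure_Ioo zero_ne_one]

noncomputable def klDivFin {α : Type*} [Fintype α] (τ μ : α → ℝ) : ℝ :=
  ∑ x, τ x * log (τ x / μ x)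

section ChainRule

variable {n : ℕ} {ν τ μ : (Fin n → Bool) → ℝ}

lemma preProb_nonneg (hν : ∀ x, 0 ≤ ν x) (i : Fin n) (x : Fin n → Bool) :
    0 ≤ preProb n ν i x := by
  rw [preProb_eq_fiberMass]
  exact fiberMass_nonneg hν _

lemma condP_nonneg (hν : ∀ x, 0 ≤ ν x) (i : Fin n) (x : Fin n → Bool) : 0 ≤ condP n ν i x := by
  rw [condP_eq_condProb]
  exact condProb_nonneg _ hν _

lemma condP_le_one (hν : ∀ x, 0 ≤ ν x) (i : Fin n) (x : Fin n → Bool) : condP n ν i x ≤ 1 := by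
  rw [condP_eq_condProb]
  exact condProb_le_one _ hν _

lemma bitCond_pos (hν : ∀ x, 0 ≤ ν x) {x : Fin n → Bool} (hx : 0 < ν x) (i : Fin n) :
    0 < bitCond n ν i x := by
  refine pos_of_mul_pos_right ?_ (preProb_nonneg hν i x)
  rw [← fiberMass_truncate_succ hν]
  exact hx.trans_le (le_fiberMass hν x)

lemma condP_mem_Ioo (hμ : ∀ x, 0 < μ x) (i : Fin n) (x : Fin n → Bool) :
    condP n μ i x ∈ Set.Ioo 0 1 := by
  have hμ' : ∀ x, 0 ≤ μ x := fun x => (hμ x).le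
  have h1 := bitCond_pos hμ' (hμ (Function.update x i true)) i
  have h0 := bitCond_pos hμ' (hμ (Function.update x i false)) i
  simp only [bitCond, Function.update_self, condP_update] at h1 h0
  exact ⟨h1, by simpa using h0⟩

-- Telescope over the prefix masses of `x`.
lemma log_eq_sum_log_bitCond (hν : ∀ x, 0 ≤ ν x) (hν1 : ∑ x, ν x = 1) {x : Fin n → Bool}
    (hx : 0 < ν x) : log (ν x) = ∑ i, log (bitCond n ν i x) := by
  set m : ℕ → ℝ := fun k => fiberMass (truncate k) ν (truncate k x)
  have hm : ∀ k, 0 < m k := fun k => hx.trans_le (le_fiberMass hν x)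
  have hstep : ∀ i : Fin n, log (bitCond n ν i x) = log (m (i + 1)) - log (m i) := by
    intro i
    have hp : 0 < preProb n ν i x := by
      rw [preProb_eq_fiberMass]
      exact hm i
    simp only [m, fiberMass_truncate_succ hν, ← preProb_eq_fiberMass,
      log_mul hp.ne' (bitCond_pos hν hx i).ne']
    ring
  rw [sum_congr rfl fun i _ => hstep i,
    Fin.sum_univ_eq_sum_range (fun k => log (m (k + 1)) - log (m k)),
    sum_range_sub (fun k => log (m k))]
  simp [m, fiberMass_truncate_self, fiberMass_truncate_zero, hν1]

-- Averaging over bit `i` given the prefix turns the log-ratio into a binary relative entropy.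
lemma sum_mul_log_bitCond_sub (hμ : ∀ x, 0 < μ x) (hτ : ∀ x, 0 ≤ τ x) (i : Fin n) :
    ∑ x, τ x * (log (bitCond n τ i x) - log (bitCond n μ i x))
      = ∑ w, τ w * klBer (condP n τ i w) (condP n μ i w) := by
  set c : ((Fin n → Bool) → ℝ) → (Fin n → Bool) → ℝ :=
    fun ν => condProb (truncate i) ν (fun x => x i = true)
  set A : (Fin n → Bool) → ℝ := fun b => log (c τ b) - log (c μ b)
  set B : (Fin n → Bool) → ℝ := fun b => log (1 - c τ b) - log (1 - c μ b)
  have hpt : ∀ x, τ x * (log (bitCond n τ i x) - log (bitCond n μ i x))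
      = τ x * B (truncate i x) + (if x i = true then τ x else 0) * (A - B) (truncate i x) := by
    intro x
    simp only [bitCond, condP_eq_condProb, A, B, c, Pi.sub_apply]
    split_ifs <;> ring
  rw [sum_congr rfl fun x _ => hpt x, sum_add_distrib,
    ← sum_mul_condProb_mul (fun x : Fin n → Bool => x i = true) hτ, ← sum_add_distrib]
  refine sum_congr rfl fun x _ => ?_
  obtain ⟨hμ0, hμ1⟩ := condP_mem_Ioo hμ i x
  rw [condP_eq_condProb] at hμ0 hμ1
  rw [condP_eq_condProb, condP_eq_condProb, klBer_eq hμ0.ne' hμ1.ne]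
  simp only [A, B, c, Pi.sub_apply]
  ring

theorem klDivFin_eq_sum_klBer (hμ : ∀ x, 0 < μ x) (hμ1 : ∑ x, μ x = 1)
    (hτ : ∀ x, 0 ≤ τ x) (hτ1 : ∑ x, τ x = 1) :
    klDivFin τ μ = ∑ i, ∑ w, τ w * klBer (condP n τ i w) (condP n μ i w) := by
  have hpt : ∀ x, τ x * log (τ x / μ x)
      = ∑ i, τ x * (log (bitCond n τ i x) - log (bitCond n μ i x)) := by
    intro x
    rcases (hτ x).eq_or_lt with h | h
    · simp [← h]
    · rw [← mul_sum, sum_sub_distrib, ← log_eq_sum_log_bitCond hτ hτ1 h,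
        ← log_eq_sum_log_bitCond (fun y => (hμ y).le) hμ1 (hμ x), log_div h.ne' (hμ x).ne']
  rw [klDivFin, sum_congr rfl fun x _ => hpt x, sum_comm]
  exact sum_congr rfl fun i _ => sum_mul_log_bitCond_sub hμ hτ i

end ChainRule

section Pinsker

variable {α : Type*}

-- The log-sum inequality: Jensen for `x log x` with weights `g`.
lemma sum_mul_log_div_sum_le (s : Finset α) (f g : α → ℝ) (hf : ∀ x ∈ s, 0 ≤ f x)
    (hg : ∀ x ∈ s, 0 < g x) :
    (∑ x ∈ s, f x) * log ((∑ x ∈ s, f x) / ∑ x ∈ s, g x) ≤ ∑ x ∈ s, f x * log (f x / g x) := by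
  rcases s.eq_empty_or_nonempty with rfl | hs
  · simp
  have hG := sum_pos hg hs
  have hJ := convexOn_mul_log.map_centerMass_le (t := s) (w := g) (p := fun x => f x / g x)
    (fun x hx => (hg x hx).le) hG (fun x hx => Set.mem_Ici.2 (div_nonneg (hf x hx) (hg x hx).le))
  have e1 : ∑ x ∈ s, g x * (f x / g x) = ∑ x ∈ s, f x :=
    sum_congr rfl fun x hx => mul_div_cancel₀ _ (hg x hx).ne'
  have e2 : ∑ x ∈ s, g x * (f x / g x * log (f x / g x)) = ∑ x ∈ s, f x * log (f x / g x) :=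
    sum_congr rfl fun x hx => by rw [← mul_assoc, mul_div_cancel₀ _ (hg x hx).ne']
  simp only [centerMass, smul_eq_mul, Function.comp_apply, e1, e2, ← div_eq_inv_mul] at hJ
  set F := ∑ x ∈ s, f x
  set G := ∑ x ∈ s, g x
  calc F * log (F / G) = G * (F / G * log (F / G)) := by field_simp
    _ ≤ G * ((∑ x ∈ s, f x * log (f x / g x)) / G) := by gcongr
    _ = ∑ x ∈ s, f x * log (f x / g x) := by field_simp

variable [Fintype α] {τ μ : α → ℝ}

lemma klBer_le_klDivFin (s : Finset α) (hμ : ∀ x, 0 < μ x) (hμ1 : ∑ x, μ x = 1)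
    (hτ : ∀ x, 0 ≤ τ x) (hτ1 : ∑ x, τ x = 1) :
    klBer (∑ x ∈ s, τ x) (∑ x ∈ s, μ x) ≤ klDivFin τ μ := by
  classical
  have hcompl : ∀ ν : α → ℝ, ∑ x, ν x = 1 → 1 - ∑ x ∈ s, ν x = ∑ x ∈ sᶜ, ν x := fun ν h => by
    rw [← h, ← sum_add_sum_compl s]
    ring
  rw [klDivFin, ← sum_add_sum_compl s, klBer, hcompl τ hτ1, hcompl μ hμ1]
  exact add_le_add (sum_mul_log_div_sum_le s τ μ (fun x _ => hτ x) fun x _ => hμ x)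
    (sum_mul_log_div_sum_le sᶜ τ μ (fun x _ => hτ x) fun x _ => hμ x)

lemma tvDist_eq_sum_filter (hμ1 : ∑ x, μ x = 1) (hτ1 : ∑ x, τ x = 1) :
    tvDist τ μ = ∑ x with μ x ≤ τ x, (τ x - μ x) := by
  classical
  have hzero : ∑ x with μ x ≤ τ x, (τ x - μ x) + ∑ x with ¬μ x ≤ τ x, (τ x - μ x) = 0 := by
    rw [sum_filter_add_sum_filter_not, sum_sub_distrib, hτ1, hμ1, sub_self]
  have hpos : ∑ x with μ x ≤ τ x, |τ x - μ x| = ∑ x with μ x ≤ τ x, (τ x - μ x) :=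
    sum_congr rfl fun x hx => abs_of_nonneg (sub_nonneg.2 (mem_filter.1 hx).2)
  have hneg : ∑ x with ¬μ x ≤ τ x, |τ x - μ x| = -∑ x with ¬μ x ≤ τ x, (τ x - μ x) := by
    rw [← sum_neg_distrib]
    exact sum_congr rfl fun x hx => abs_of_neg (sub_neg.2 (not_le.1 (mem_filter.1 hx).2))
  rw [tvDist, ← sum_filter_add_sum_filter_not univ (fun x => μ x ≤ τ x), hpos, hneg]
  linarith

-- Data processing for the partition `{A, Aᶜ}`, `A = {μ ≤ τ}`, reduces Pinsker to the binary case.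
theorem sq_tvDist_le_klDivFin (hμ : ∀ x, 0 < μ x) (hμ1 : ∑ x, μ x = 1) (hτ : ∀ x, 0 ≤ τ x)
    (hτ1 : ∑ x, τ x = 1) :
    tvDist τ μ ^ 2 ≤ klDivFin τ μ / 2 := by
  classical
  set A := univ.filter fun x => μ x ≤ τ x
  set a := ∑ x ∈ A, τ x
  set b := ∑ x ∈ A, μ x
  have hcompl : ∀ ν : α → ℝ, ∑ x ∈ Aᶜ, ν x = ∑ x, ν x - ∑ x ∈ A, ν x := fun ν => by
    rw [← sum_add_sum_compl A]
    ring
  have hpinsker : 2 * (a - b) ^ 2 ≤ klBer a b := by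
    by_cases hb : b ∈ Set.Ioo 0 1
    · refine two_mul_sq_le_klBer ⟨sum_nonneg fun x _ => hτ x, ?_⟩ hb
      linarith [hcompl τ, sum_nonneg fun x (_ : x ∈ Aᶜ) => hτ x]
    · suffices a = b by simp [this, klBer_self]
      rcases A.eq_empty_or_nonempty with hA | hA
      · simp [a, b, hA]
      rcases Aᶜ.eq_empty_or_nonempty with hAc | hAc
      · rw [compl_eq_empty_iff] at hAc
        simp [a, b, hAc, hτ1, hμ1]
      have := sum_pos (fun x _ => hμ x) hAc
      exact absurd ⟨sum_pos (fun x _ => hμ x) hA, by linarith [hcompl μ]⟩ hb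
  have htv : tvDist τ μ = a - b := by rw [tvDist_eq_sum_filter hμ1 hτ1, sum_sub_distrib]
  have hdp := klBer_le_klDivFin A hμ hμ1 hτ hτ1
  rw [htv]
  linarith

end Pinsker

lemma klFun_le_log_mul_sq_div {x M : ℝ} (hx : 0 ≤ x) (hxM : x ≤ M) (hM : 2 ≤ M) :
    klFun x ≤ 6 * log M * (x - 1) ^ 2 / (x + 1) := by
  have hlog2 : 1 / 2 < log M := by
    have := log_two_gt_d9
    have := log_le_log two_pos hM
    linarith
  rw [le_div_iff₀ (by linarith), klFun_apply]
  rcases le_total x 2 with hx2 | hx2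
  · have hxlog : x * log x ≤ x * (x - 1) := by
      rcases hx.eq_or_lt with rfl | hx0
      · simp
      · exact mul_le_mul_of_nonneg_left (log_le_sub_one_of_pos hx0) hx
    nlinarith [mul_le_mul_of_nonneg_right hxlog (by linarith : (0 : ℝ) ≤ x + 1),
      mul_le_mul_of_nonneg_left hlog2.le (sq_nonneg (x - 1)), sq_nonneg (x - 1)]
  · -- `x (x + 1) ≤ 6 (x - 1)²` for `x ≥ 2`, since `(5x - 3)(x - 2) ≥ 0`
    have hxlog : x * log x ≤ x * log M :=
      mul_le_mul_of_nonneg_left (log_le_log (by linarith) hxM) hx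
    nlinarith [mul_le_mul_of_nonneg_right hxlog (by linarith : (0 : ℝ) ≤ x + 1),
      mul_nonneg (by linarith : (0 : ℝ) ≤ 5 * x - 3) (by linarith : (0 : ℝ) ≤ x - 2)]

lemma klBer_le_chiSq {q p r : ℝ} (hq0 : 0 < q) (hq : q ≤ 1 / 2) (hp0 : 0 ≤ p) (hp1 : p ≤ 1)
    (hqr : q ≤ r) (hr : r ≤ 1 - q) :
    klBer p r ≤ 12 * log (1 / q) * chiSq p r := by
  have hM : 2 ≤ 1 / q := by rw [le_div_iff₀ hq0]; linarith
  have hr0 : 0 < r := hq0.trans_le hqr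
  have hr1 : 0 < 1 - r := by linarith
  have h1 : r * klFun (p / r) ≤ 6 * log (1 / q) * (p - r) ^ 2 / (p + r) :=
    calc r * klFun (p / r)
        ≤ r * (6 * log (1 / q) * (p / r - 1) ^ 2 / (p / r + 1)) :=
          mul_le_mul_of_nonneg_left (klFun_le_log_mul_sq_div (div_nonneg hp0 hr0.le)
            (div_le_div₀ zero_le_one hp1 hq0 hqr) hM) hr0.le
      _ = 6 * log (1 / q) * (p - r) ^ 2 / (p + r) := by field_simp
  have h2 : (1 - r) * klFun ((1 - p) / (1 - r))
      ≤ 6 * log (1 / q) * (p - r) ^ 2 / ((1 - p) + (1 - r)) :=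
    calc (1 - r) * klFun ((1 - p) / (1 - r))
        ≤ (1 - r) * (6 * log (1 / q) * ((1 - p) / (1 - r) - 1) ^ 2 / ((1 - p) / (1 - r) + 1)) :=
          mul_le_mul_of_nonneg_left (klFun_le_log_mul_sq_div (div_nonneg (by linarith) hr1.le)
            (div_le_div₀ zero_le_one (by linarith) hq0 (by linarith)) hM) hr1.le
      _ = 6 * log (1 / q) * (p - r) ^ 2 / ((1 - p) + (1 - r)) := by
          field_simp
          ring
  rw [klBer_eq_klFun hr0 (by linarith), chiSq]
  calc _ ≤ 6 * log (1 / q) * (p - r) ^ 2 / (p + r)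
        + 6 * log (1 / q) * (p - r) ^ 2 / ((1 - p) + (1 - r)) := add_le_add h1 h2
    _ = 12 * log (1 / q) * ((p - r) ^ 2 / ((p + r) * (2 - (p + r)))) := by
        have : p + r ≠ 0 := by linarith
        have : 1 - p + (1 - r) ≠ 0 := by linarith
        have : 2 - (p + r) ≠ 0 := by linarith
        field_simp
        ring

lemma deltaChi_nonneg {n : ℕ} {τ μ : (Fin n → Bool) → ℝ} (hμ : ∀ x, 0 ≤ μ x)
    (hτ : ∀ x, 0 ≤ τ x) : 0 ≤ deltaChi n τ μ :=
  sum_nonneg fun i _ => sum_nonneg fun w _ =>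
    mul_nonneg (hτ w) (div_nonneg (sq_nonneg _) (mul_nonneg
      (add_nonneg (condP_nonneg hτ i w) (condP_nonneg hμ i w))
      (by linarith [condP_le_one hτ i w, condP_le_one hμ i w])))

lemma klDivFin_le_mul_deltaChi {n : ℕ} {q : ℝ} (hq0 : 0 < q) (hq : q ≤ 1 / 2)
    {μ τ : (Fin n → Bool) → ℝ} (hμ : ∀ x, 0 < μ x) (hμ1 : ∑ x, μ x = 1)
    (hτ : ∀ x, 0 ≤ τ x) (hτ1 : ∑ x, τ x = 1)
    (hcond : ∀ (i : Fin n) (w : Fin n → Bool),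
      condP n τ i w = condP n μ i w ∨ (q ≤ condP n μ i w ∧ condP n μ i w ≤ 1 - q)) :
    klDivFin τ μ ≤ 12 * log (1 / q) * deltaChi n τ μ := by
  rw [klDivFin_eq_sum_klBer hμ hμ1 hτ hτ1, deltaChi, mul_sum]
  refine sum_le_sum fun i _ => ?_
  rw [mul_sum]
  refine sum_le_sum fun w _ => ?_
  rcases hcond i w with h | ⟨h1, h2⟩
  · simp [h, klBer_self, chiSq]
  · rw [mul_left_comm]
    exact mul_le_mul_of_nonneg_left (klBer_le_chiSq hq0 hq (condP_nonneg hτ i w)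
      (condP_le_one hτ i w) h1 h2) (hτ w)

theorem stmt_7 (n : ℕ) (q : ℝ) (hq0 : 0 < q) (hq1 : q < 1 / 2)
    (μ τ : (Fin n → Bool) → ℝ)
    (hμ0 : ∀ x, 0 < μ x) (hμ1 : ∑ x, μ x = 1)
    (hτ0 : ∀ x, 0 ≤ τ x) (hτ1 : ∑ x, τ x = 1)
    (hcond : ∀ (i : Fin n) (w : Fin n → Bool),
      condP n τ i w = condP n μ i w ∨ (q ≤ condP n μ i w ∧ condP n μ i w ≤ 1 - q)) :
    deltaChi n τ μ ≥ (1 / 6) * (tvDist τ μ) ^ 2 / Real.logb 2 (1 / q) := by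
  have hpinsker := sq_tvDist_le_klDivFin hμ0 hμ1 hτ0 hτ1
  have hkl := klDivFin_le_mul_deltaChi hq0 hq1.le hμ0 hμ1 hτ0 hτ1 hcond
  have hΔ := deltaChi_nonneg (fun x => (hμ0 x).le) hτ0
  have hlogb : log (1 / q) ≤ logb 2 (1 / q) := by
    rw [logb, le_div_iff₀ (log_pos one_lt_two)]
    nlinarith [log_two_lt_d9, log_nonneg (by rw [le_div_iff₀ hq0]; linarith : (1 : ℝ) ≤ 1 / q)]
  have hL : 0 < logb 2 (1 / q) := logb_pos one_lt_two (by rw [lt_div_iff₀ hq0]; linarith)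
  rw [ge_iff_le, div_le_iff₀ hL]
  nlinarith [mul_le_mul_of_nonneg_right hlogb hΔ]
end

section
/- Let 0 ≤ p ≤ q ≤ 1 with p + q ≤ 1, and let X be the sum of N i.i.d. Ber(p) random variables. Then Pr[X ≥ (p+q)N/2] ≤ exp(−χ²(p,q)·N/12), where χ²(p,q) = (p−q)²/((p+q)(2−(p+q))). -/
/-- Binomial(N, p) probability mass at k. -/
noncomputable def binomPMF (N : ℕ) (p : ℝ) (k : ℕ) : ℝ :=
  (N.choose k : ℝ) * p ^ k * (1 - p) ^ (N - k)

lemma expA {s : ℝ} (h0 : 0 ≤ s) (h1 : s ≤ 1) : Real.exp s ≤ 1 + s + s ^ 2 := by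
  have h := Real.exp_bound' h0 h1 (n := 2) (by norm_num)
  simp [Finset.sum_range_succ, Nat.factorial] at h
  nlinarith [sq_nonneg s]

lemma mgf (N : ℕ) (p l : ℝ) :
    ∑ k ∈ Finset.range (N + 1), l ^ k * binomPMF N p k = (p * l + (1 - p)) ^ N := by
  rw [add_pow]
  apply Finset.sum_congr rfl
  intro k hk
  simp only [binomPMF]
  ring

lemma keyC1 {p q : ℝ} (hp : 0 < p) (hpq : p ≤ q) (hsum : p + q ≤ 1) (hd : 4 * p ≤ q - p)
    (hA : 0 < (p + q) * (2 - (p + q))) :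
    p * 1 + p * 1 ^ 2 - 1 * (p + q) / 2 ≤ -((p - q) ^ 2 / ((p + q) * (2 - (p + q))) / 12) := by
  have h2 : q - p ≤ (p + q) * (2 - (p + q)) := by nlinarith
  have h1 : (p - q) ^ 2 / ((p + q) * (2 - (p + q))) ≤ (q - p) := by
    rw [div_le_iff₀ hA]
    nlinarith [mul_le_mul_of_nonneg_left h2 (sub_nonneg.2 hpq)]
  nlinarith

lemma keyC2 {p q : ℝ} (hp : 0 < p) (hpq : p ≤ q) (hsum : p + q ≤ 1) (hd : q - p ≤ 4 * p)
    (hA : 0 < (p + q) * (2 - (p + q))) :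
    p * ((q - p) / (4 * p)) + p * ((q - p) / (4 * p)) ^ 2 - ((q - p) / (4 * p)) * (p + q) / 2
      ≤ -((p - q) ^ 2 / ((p + q) * (2 - (p + q))) / 12) := by
  have h4p : (0:ℝ) < 4 * p := by linarith
  have hLHS : p * ((q - p) / (4 * p)) + p * ((q - p) / (4 * p)) ^ 2
      - ((q - p) / (4 * p)) * (p + q) / 2 = -((q - p) ^ 2 / (16 * p)) := by
    field_simp
    ring
  rw [hLHS, neg_le_neg_iff]
  have h2p : 2 * p ≤ (p + q) * (2 - (p + q)) := by nlinarith
  rw [div_div, div_le_div_iff₀ (by positivity) (by positivity)]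
  nlinarith [mul_le_mul_of_nonneg_left h2p (sq_nonneg (p - q))]

lemma keyC {p q : ℝ} (hp : 0 < p) (hpq : p ≤ q) (hsum : p + q ≤ 1) :
    p * min 1 ((q - p) / (4 * p)) + p * min 1 ((q - p) / (4 * p)) ^ 2
      - min 1 ((q - p) / (4 * p)) * (p + q) / 2 ≤ -(chiSq p q / 12) := by
  have hA : 0 < (p + q) * (2 - (p + q)) := by nlinarith
  show _ ≤ -((p - q) ^ 2 / ((p + q) * (2 - (p + q))) / 12)
  rcases min_cases 1 ((q - p) / (4 * p)) with ⟨h1, h2⟩ | ⟨h1, h2⟩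
  · rw [h1]
    exact keyC1 hp hpq hsum (by rw [le_div_iff₀ (by linarith)] at h2; linarith) hA
  · rw [h1]
    exact keyC2 hp hpq hsum (by rw [div_lt_iff₀ (by linarith)] at h2; linarith) hA

theorem stmt_9 (p q : ℝ) (N : ℕ) (hp : 0 ≤ p) (hpq : p ≤ q) (hq : q ≤ 1)
    (hsum : p + q ≤ 1) :
    (∑ k ∈ Finset.range (N + 1), if (p + q) * N / 2 ≤ (k : ℝ) then binomPMF N p k else 0)
      ≤ Real.exp (-(chiSq p q * N / 12)) := by
  have hp1 : p ≤ 1 := hpq.trans hq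
  have hpmf : ∀ k, 0 ≤ binomPMF N p k := fun k => by
    unfold binomPMF
    exact mul_nonneg (mul_nonneg (Nat.cast_nonneg _) (pow_nonneg hp _))
      (pow_nonneg (by linarith) _)
  rcases Nat.eq_zero_or_pos N with hN | hN
  · subst hN
    simp [binomPMF]
  rcases eq_or_lt_of_le hp with hp0 | hp0
  · -- p = 0
    rcases eq_or_lt_of_le (hp0.le.trans hpq) with hq0 | hq0
    · -- q = 0 as well
      subst hp0; subst hq0
      have : chiSq 0 0 = 0 := by simp [chiSq]
      rw [this]
      simp only [zero_mul, zero_div, neg_zero, Real.exp_zero]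
      calc (∑ k ∈ Finset.range (N + 1), if (0 + (0:ℝ)) * N / 2 ≤ (k : ℝ) then binomPMF N 0 k else 0)
          ≤ ∑ k ∈ Finset.range (N + 1), 1 ^ k * binomPMF N 0 k := by
            apply Finset.sum_le_sum
            intro k hk
            rw [one_pow, one_mul]
            split_ifs <;> [exact le_refl _; exact hpmf k]
        _ = ((0:ℝ) * 1 + (1 - 0)) ^ N := mgf N 0 1
        _ = 1 := by norm_num
    · -- q > 0
      subst hp0
      · have hzero : (∑ k ∈ Finset.range (N + 1),
            if (0 + q) * N / 2 ≤ (k : ℝ) then binomPMF N 0 k else 0) = 0 := by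
          apply Finset.sum_eq_zero
          intro k hk
          split_ifs with h
          · rcases Nat.eq_zero_or_pos k with hk0 | hk0
            · exfalso
              subst hk0
              have hN' : (0:ℝ) < (N:ℝ) := by exact_mod_cast hN
              have : (0:ℝ) < (0 + q) * N / 2 := by positivity
              simp only [Nat.cast_zero] at h
              linarith
            · simp [binomPMF, zero_pow (Nat.pos_iff_ne_zero.mp hk0)]
          · rfl
        rw [hzero]
        positivity
  · -- main case p > 0
    set s := min 1 ((q - p) / (4 * p)) with hs
    have hs0 : 0 ≤ s := le_min zero_le_one (div_nonneg (by linarith) (by linarith))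
    have hs1 : s ≤ 1 := min_le_left _ _
    set t := (p + q) * (N : ℝ) / 2 with ht
    -- Step 1: termwise Chernoff
    have step1 : (∑ k ∈ Finset.range (N + 1), if t ≤ (k : ℝ) then binomPMF N p k else 0)
        ≤ Real.exp (-(s * t)) * ∑ k ∈ Finset.range (N + 1),
            (Real.exp s) ^ k * binomPMF N p k := by
      rw [Finset.mul_sum]
      apply Finset.sum_le_sum
      intro k hk
      have hterm : 0 ≤ (Real.exp s) ^ k * binomPMF N p k :=
        mul_nonneg (pow_nonneg (Real.exp_nonneg s) k) (hpmf k)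
      split_ifs with h
      · have h1 : binomPMF N p k ≤ Real.exp (s * ((k : ℝ) - t)) * binomPMF N p k := by
          apply le_mul_of_one_le_left (hpmf k)
          exact Real.one_le_exp (mul_nonneg hs0 (by linarith))
        calc binomPMF N p k ≤ Real.exp (s * ((k : ℝ) - t)) * binomPMF N p k := h1
          _ = Real.exp (-(s * t) + (k : ℝ) * s) * binomPMF N p k := by
              rw [show s * ((k : ℝ) - t) = -(s * t) + (k : ℝ) * s by ring]
          _ = Real.exp (-(s * t)) * ((Real.exp s) ^ k * binomPMF N p k) := by
              rw [Real.exp_add, Real.exp_nat_mul, mul_assoc]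
      · exact mul_nonneg (Real.exp_nonneg _) hterm
    -- Step 2: MGF bound
    have hbase : (0:ℝ) ≤ p * Real.exp s + (1 - p) :=
      add_nonneg (mul_nonneg hp (Real.exp_nonneg s)) (by linarith)
    have step2 : (p * Real.exp s + (1 - p)) ^ N ≤ Real.exp ((N : ℝ) * (p * s + p * s ^ 2)) := by
      have h1 : p * Real.exp s + (1 - p) ≤ Real.exp (p * s + p * s ^ 2) := by
        have he : Real.exp s ≤ 1 + s + s ^ 2 := expA hs0 hs1
        have h2 : p * Real.exp s + (1 - p) ≤ 1 + (p * s + p * s ^ 2) := by nlinarith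
        exact h2.trans (by linarith [Real.add_one_le_exp (p * s + p * s ^ 2)])
      calc (p * Real.exp s + (1 - p)) ^ N ≤ (Real.exp (p * s + p * s ^ 2)) ^ N :=
            pow_le_pow_left₀ hbase h1 N
        _ = Real.exp ((N : ℝ) * (p * s + p * s ^ 2)) := by rw [← Real.exp_nat_mul]
    -- Combine
    calc (∑ k ∈ Finset.range (N + 1), if t ≤ (k : ℝ) then binomPMF N p k else 0)
        ≤ Real.exp (-(s * t)) * ∑ k ∈ Finset.range (N + 1),
            (Real.exp s) ^ k * binomPMF N p k := step1
      _ = Real.exp (-(s * t)) * (p * Real.exp s + (1 - p)) ^ N := by rw [mgf]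
      _ ≤ Real.exp (-(s * t)) * Real.exp ((N : ℝ) * (p * s + p * s ^ 2)) := by
          apply mul_le_mul_of_nonneg_left step2 (Real.exp_nonneg _)
      _ = Real.exp ((N : ℝ) * (p * s + p * s ^ 2) - s * t) := by
          rw [← Real.exp_add]; ring_nf
      _ ≤ Real.exp (-(chiSq p q * N / 12)) := by
          apply Real.exp_le_exp.2
          have hkey := keyC hp0 hpq hsum
          have := mul_le_mul_of_nonneg_left hkey (Nat.cast_nonneg N : (0:ℝ) ≤ N)
          rw [← hs] at this
          rw [ht]
          nlinarith [this]
end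

section
/- Let 0 ≤ p ≤ q ≤ 1 with p + q ≤ 1, and let Y be the sum of N i.i.d. Ber(q) random variables. Then Pr[Y ≤ (p+q)N/2] ≤ exp(−χ²(p,q)·N/8), where χ²(p,q) = (p−q)²/((p+q)(2−(p+q))). -/
lemma key_log (d : ℝ) (h0 : 0 ≤ d) (h1 : d ≤ 1) : Real.log (1 + d) ≤ d - d ^ 2 / 4 := by
  rw [Real.log_le_iff_le_exp (by linarith)]
  have h := Real.sum_le_exp_of_nonneg (x := d - d ^ 2 / 4) (by nlinarith) 3
  simp [Finset.sum_range_succ, Nat.factorial] at h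
  nlinarith [sq_nonneg d, sq_nonneg (1 - d), sq_nonneg (d - d^2/4)]


lemma main_ineq (t d c : ℝ) (ht0 : 0 < t) (hthalf : t ≤ 1 / 2) (hd0 : 0 ≤ d)
    (hd1 : d ≤ 1) (hc : c = t * d ^ 2 / (1 - t)) :
    t * Real.log (1 + d) - t * d ≤ -(c / 8) := by
  have hkey := key_log d hd0 hd1
  have h1t : (0:ℝ) < 1 - t := by linarith
  rw [hc]
  have h2 : t * Real.log (1 + d) ≤ t * (d - d ^ 2 / 4) :=
    mul_le_mul_of_nonneg_left hkey ht0.le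
  have h3 : t * d ^ 2 / (1 - t) / 8 ≤ t * d ^ 2 / 4 := by
    rw [div_div, div_le_div_iff₀ (by nlinarith) (by norm_num)]
    nlinarith [mul_nonneg ht0.le (sq_nonneg d)]
  nlinarith [h2, h3]

lemma binomPMF_nonneg (N : ℕ) (q : ℝ) (k : ℕ) (h0 : 0 ≤ q) (h1 : q ≤ 1) :
    0 ≤ binomPMF N q k := by
  unfold binomPMF
  have : (0:ℝ) ≤ 1 - q := by linarith
  positivity

theorem stmt_10 (p q : ℝ) (N : ℕ) (hp : 0 ≤ p) (hpq : p ≤ q) (hq : q ≤ 1)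
    (hsum : p + q ≤ 1) :
    (∑ k ∈ Finset.range (N + 1), if (k : ℝ) ≤ (p + q) * N / 2 then binomPMF N q k else 0)
      ≤ Real.exp (-(chiSq p q * N / 8)) := by
  have hq0 : 0 ≤ q := le_trans hp hpq
  rcases eq_or_lt_of_le hpq with heq | hlt
  · -- p = q : chiSq = 0, RHS = 1, LHS ≤ 1
    have hc : chiSq p q = 0 := by
      unfold chiSq; rw [← heq]; simp
    rw [hc]
    simp only [zero_mul, zero_div, neg_zero, Real.exp_zero]
    calc (∑ k ∈ Finset.range (N + 1), if (k : ℝ) ≤ (p + q) * N / 2 then binomPMF N q k else 0)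
        ≤ ∑ k ∈ Finset.range (N + 1), binomPMF N q k := by
          apply Finset.sum_le_sum
          intro k _
          split_ifs
          · exact le_rfl
          · exact binomPMF_nonneg N q k hq0 hq
      _ = 1 := by
          unfold binomPMF
          have := add_pow q (1 - q) N
          simp only [add_sub_cancel, one_pow] at this
          conv_rhs => rw [this]
          apply Finset.sum_congr rfl
          intro k _; ring
  · -- p < q
    have hqpos : 0 < q := lt_of_le_of_lt hp hlt
    obtain ⟨t, ht⟩ : ∃ t : ℝ, t = (p + q) / 2 := ⟨_, rfl⟩
    have htpos : 0 < t := by rw [ht]; positivity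
    have hthalf : t ≤ 1 / 2 := by simp only [ht]; linarith
    have htq : t < q := by simp only [ht]; linarith
    obtain ⟨d, hd⟩ : ∃ d : ℝ, d = (q - p) / (p + q) := ⟨_, rfl⟩
    have hpq0 : 0 < p + q := by linarith
    have hne : p + q ≠ 0 := hpq0.ne'
    have hd0 : 0 ≤ d := by rw [hd]; apply div_nonneg <;> linarith
    have hd1 : d ≤ 1 := by rw [hd, div_le_one hpq0]; linarith
    obtain ⟨x, hx⟩ : ∃ x : ℝ, x = t / q := ⟨_, rfl⟩
    have hx0 : 0 < x := by rw [hx]; positivity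
    have hx1 : x ≤ 1 := by rw [hx, div_le_one hqpos]; linarith
    obtain ⟨m, hm⟩ : ∃ m : ℝ, m = t * N := ⟨_, rfl⟩
    -- Step 1
    have step1 : (∑ k ∈ Finset.range (N + 1), if (k : ℝ) ≤ (p + q) * N / 2 then binomPMF N q k else 0)
        ≤ ∑ k ∈ Finset.range (N + 1), binomPMF N q k * x ^ ((k : ℝ) - m) := by
      apply Finset.sum_le_sum
      intro k _
      have hpmf := binomPMF_nonneg N q k hq0 hq
      have hm' : (p + q) * N / 2 = m := by rw [hm, ht]; ring
      split_ifs with h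
      · have hle : (k : ℝ) - m ≤ 0 := by rw [← hm'] ; linarith
        have h1 : x ^ (0 : ℝ) ≤ x ^ ((k : ℝ) - m) :=
          Real.rpow_le_rpow_of_exponent_ge hx0 hx1 hle
        rw [Real.rpow_zero] at h1
        exact le_mul_of_one_le_right hpmf h1
      · positivity
    -- Step 2
    have step2 : ∑ k ∈ Finset.range (N + 1), binomPMF N q k * x ^ ((k : ℝ) - m)
        = (q * x + (1 - q)) ^ N * x ^ (-m) := by
      rw [add_pow, Finset.sum_mul]
      apply Finset.sum_congr rfl
      intro k _
      have : x ^ ((k : ℝ) - m) = x ^ k * x ^ (-m) := by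
        rw [show (k : ℝ) - m = (k : ℝ) + (-m) by ring, Real.rpow_add hx0,
          Real.rpow_natCast]
      rw [this]
      unfold binomPMF
      rw [mul_pow]
      ring
    -- Step 3: bound
    have hqx : q * x = t := by rw [hx]; field_simp
    have base_le : (q * x + (1 - q)) ^ N ≤ Real.exp ((t - q) * N) := by
      rw [show (t - q) * (N:ℝ) = (N:ℝ) * (t - q) by ring, Real.exp_nat_mul]
      apply pow_le_pow_left₀
      · rw [hqx]; linarith
      · rw [hqx]
        have := Real.add_one_le_exp (t - q)
        linarith
    have xm_eq : x ^ (-m) = Real.exp (Real.log x * (-m)) := Real.rpow_def_of_pos hx0 (-m)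
    have hlogx : Real.log x = -Real.log (1 + d) := by
      have h1d : 1 + d = q / t := by
        rw [hd, ht]; field_simp; ring
      rw [hx, show t / q = (q / t)⁻¹ by field_simp, Real.log_inv, h1d]
    -- exponent inequality
    have hexp_le : (t - q) * N + Real.log x * (-m) ≤ -(chiSq p q * N / 8) := by
      rw [hlogx, hm]
      have hkey := key_log d hd0 hd1
      have hqt : q - t = t * d := by rw [ht, hd]; field_simp; ring
      have hchi : chiSq p q = t * d ^ 2 / (1 - t) := by
        unfold chiSq
        rw [ht, hd]
        rw [div_eq_div_iff (by nlinarith) (by nlinarith)]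
        field_simp [hne]
        ring
      have hmain : (t - q) + (-Real.log (1 + d)) * (-t) ≤ -(chiSq p q / 8) := by
        have := main_ineq t d (chiSq p q) htpos hthalf hd0 hd1 hchi
        linarith
      calc (t - q) * N + -Real.log (1 + d) * -(t * N)
          = ((t - q) + (-Real.log (1 + d)) * (-t)) * N := by ring
        _ ≤ (-(chiSq p q / 8)) * N := by
            apply mul_le_mul_of_nonneg_right hmain (Nat.cast_nonneg N)
        _ = -(chiSq p q * N / 8) := by ring
    calc (∑ k ∈ Finset.range (N + 1), if (k : ℝ) ≤ (p + q) * N / 2 then binomPMF N q k else 0)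
        ≤ (q * x + (1 - q)) ^ N * x ^ (-m) := step1.trans (le_of_eq step2)
      _ ≤ Real.exp ((t - q) * N) * Real.exp (Real.log x * (-m)) := by
          rw [xm_eq]
          apply mul_le_mul_of_nonneg_right base_le (Real.exp_nonneg _)
      _ = Real.exp ((t - q) * N + Real.log x * (-m)) := (Real.exp_add _ _).symm
      _ ≤ Real.exp (-(chiSq p q * N / 8)) := Real.exp_le_exp.mpr hexp_le
end

section
/- For all n ≥ 1, the central binomial coefficient satisfies C(n, ⌊n/2⌋) ≤ 2ⁿ · √(2/(πn)). -/
open Stirling Real Nat Filter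

lemma sqrt_pi_le_stirling (n : ℕ) : Real.sqrt Real.pi ≤ stirlingSeq (n + 1) :=
  stirlingSeq'_antitone.le_of_tendsto
    (tendsto_stirlingSeq_sqrt_pi.comp (tendsto_add_atTop_nat 1)) n

lemma fact_eq (k : ℕ) (hk : 1 ≤ k) :
    (k ! : ℝ) = stirlingSeq k * (Real.sqrt (2 * k) * ((k : ℝ) / Real.exp 1) ^ k) := by
  have hden : (0 : ℝ) < Real.sqrt (2 * k) * ((k : ℝ) / Real.exp 1) ^ k := by
    have : (0:ℝ) < k := by exact_mod_cast hk
    positivity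
  rw [stirlingSeq, div_mul_cancel₀ _ hden.ne']

lemma central_le (m : ℕ) (hm : 1 ≤ m) :
    ((2 * m).choose m : ℝ) ≤ 4 ^ m / Real.sqrt (Real.pi * m) := by
  have hm0 : (0:ℝ) < m := by exact_mod_cast hm
  have hπ : (0:ℝ) < Real.pi := Real.pi_pos
  have hsπ : (0:ℝ) < Real.sqrt Real.pi := Real.sqrt_pos.mpr hπ
  set s := stirlingSeq with hs
  have hsm : Real.sqrt Real.pi ≤ s m := by
    obtain ⟨k, rfl⟩ := Nat.exists_eq_add_of_le hm
    simpa [Nat.add_comm] using sqrt_pi_le_stirling k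
  have hs2m : s (2 * m) ≤ s m := by
    obtain ⟨k, rfl⟩ : ∃ k, m = k + 1 := ⟨m - 1, by omega⟩
    have h := stirlingSeq'_antitone (show k ≤ 2 * k + 1 by omega)
    simpa [Function.comp, show 2 * (k + 1) = (2 * k + 1) + 1 by ring] using h
  have hsmpos : (0:ℝ) < s m := lt_of_lt_of_le hsπ hsm
  -- express choose via factorials
  have hchoose : ((2 * m).choose m : ℝ) = ((2 * m)! : ℝ) / ((m ! : ℝ))^2 := by
    have h := Nat.choose_mul_factorial_mul_factorial (show m ≤ 2 * m by omega)
    have h2 : 2 * m - m = m := by omega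
    rw [h2] at h
    have := congrArg (fun x : ℕ => (x : ℝ)) h
    push_cast at this
    field_simp [Nat.factorial_ne_zero]
    rw [sq]
    linarith [this]
  set A : ℝ := Real.sqrt (2 * (2 * m : ℕ)) * (((2 * m : ℕ) : ℝ) / Real.exp 1) ^ (2 * m) with hA
  set B : ℝ := Real.sqrt (2 * (m : ℕ)) * ((m : ℝ) / Real.exp 1) ^ m with hB
  have hApos : 0 < A := by
    have : (0:ℝ) < (2 * m : ℕ) := by exact_mod_cast (by omega : 0 < 2 * m)
    rw [hA]; positivity
  have hBpos : 0 < B := by rw [hB]; positivity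
  have hCeq : ((2 * m).choose m : ℝ) = s (2 * m) * A / (s m * B) ^ 2 := by
    rw [hchoose, fact_eq (2 * m) (by omega), fact_eq m hm]
  have hstep : s (2 * m) * A / (s m * B) ^ 2 ≤ A / (Real.sqrt Real.pi * B ^ 2) := by
    rw [mul_pow, div_le_div_iff₀ (by positivity) (by positivity)]
    have h1 : s (2 * m) * Real.sqrt Real.pi ≤ s m ^ 2 := by
      rw [sq]; exact mul_le_mul hs2m hsm hsπ.le hsmpos.le
    calc s (2 * m) * A * (Real.sqrt Real.pi * B ^ 2)
        = (s (2 * m) * Real.sqrt Real.pi) * (A * B ^ 2) := by ring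
      _ ≤ s m ^ 2 * (A * B ^ 2) := mul_le_mul_of_nonneg_right h1 (by positivity)
      _ = A * (s m ^ 2 * B ^ 2) := by ring
  have hfinal : A / (Real.sqrt Real.pi * B ^ 2) = 4 ^ m / Real.sqrt (Real.pi * m) := by
    have hB2 : B ^ 2 = 2 * m * ((m : ℝ) / Real.exp 1) ^ (2 * m) := by
      rw [hB, mul_pow, Real.sq_sqrt (by positivity), ← pow_mul, mul_comm m 2]
    have hA' : A = 2 * Real.sqrt m * (2 ^ (2 * m) * ((m : ℝ) / Real.exp 1) ^ (2 * m)) := by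
      rw [hA]
      have : ((2 * m : ℕ) : ℝ) = 2 * m := by push_cast; ring
      rw [this]
      have h4 : Real.sqrt (2 * (2 * (m:ℝ))) = 2 * Real.sqrt m := by
        rw [show (2 : ℝ) * (2 * m) = 4 * m by ring, show (4:ℝ) = 2^2 by norm_num,
          Real.sqrt_mul (by positivity), Real.sqrt_sq (by norm_num)]
      rw [h4, mul_div_assoc, mul_pow]
    rw [hA', hB2, Real.sqrt_mul hπ.le]
    have hpow : (0:ℝ) < ((m : ℝ) / Real.exp 1) ^ (2 * m) := by positivity
    have hsqm : (0:ℝ) < Real.sqrt m := Real.sqrt_pos.mpr hm0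
    have hmsq : Real.sqrt m * Real.sqrt m = m := Real.mul_self_sqrt hm0.le
    field_simp
    rw [show (2:ℝ) ^ (2 * m) = 4 ^ m by rw [pow_mul]; norm_num]
    ring_nf
    rw [Real.sq_sqrt hm0.le]
  rw [hCeq, ← hfinal]; exact hstep

lemma odd_le (m : ℕ) (hm : 1 ≤ m) :
    ((2 * m + 1).choose m : ℝ) ≤ 2 ^ (2 * m + 1) * Real.sqrt (2 / (Real.pi * (2 * m + 1))) := by
  have hπ : (0:ℝ) < Real.pi := Real.pi_pos
  have hm0 : (0:ℝ) < m := by exact_mod_cast hm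
  have hid : (2 * m + 1) * (2 * m).choose m = (2 * m + 1).choose m * (m + 1) := by
    have h := Nat.add_one_mul_choose_eq (2 * m) m
    rwa [Nat.choose_symm_half] at h
  have hCeq : ((2 * m + 1).choose m : ℝ) = (2 * m + 1) / (m + 1) * ((2 * m).choose m : ℝ) := by
    have := congrArg (fun x : ℕ => (x : ℝ)) hid
    push_cast at this
    field_simp
    linarith [this]
  have hkey : (2 * (m:ℝ) + 1) / ((m + 1) * Real.sqrt (Real.pi * m)) ≤
      2 * Real.sqrt (2 / (Real.pi * (2 * m + 1))) := by
    have h2 : (2:ℝ) * Real.sqrt (2 / (Real.pi * (2 * m + 1))) =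
        Real.sqrt (8 / (Real.pi * (2 * m + 1))) := by
      rw [show (8:ℝ) / (Real.pi * (2 * m + 1)) = 2 ^ 2 * (2 / (Real.pi * (2 * m + 1))) by ring,
        Real.sqrt_mul (by positivity), Real.sqrt_sq (by norm_num)]
    rw [h2, Real.le_sqrt (by positivity) (by positivity)]
    rw [div_pow, mul_pow, Real.sq_sqrt (by positivity)]
    rw [div_le_div_iff₀ (by positivity) (by positivity)]
    have h1 : (1:ℝ) ≤ m := by exact_mod_cast hm
    nlinarith [hπ.le, sq_nonneg ((m:ℝ) - 1), hπ]
  calc ((2 * m + 1).choose m : ℝ)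
      = (2 * m + 1) / (m + 1) * ((2 * m).choose m : ℝ) := hCeq
    _ ≤ (2 * m + 1) / (m + 1) * (4 ^ m / Real.sqrt (Real.pi * m)) := by
        apply mul_le_mul_of_nonneg_left (central_le m hm) (by positivity)
    _ = 4 ^ m * ((2 * (m:ℝ) + 1) / ((m + 1) * Real.sqrt (Real.pi * m))) := by
        push_cast; field_simp
    _ ≤ 4 ^ m * (2 * Real.sqrt (2 / (Real.pi * (2 * m + 1)))) := by
        apply mul_le_mul_of_nonneg_left hkey (by positivity)
    _ = 2 ^ (2 * m + 1) * Real.sqrt (2 / (Real.pi * (2 * m + 1))) := by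
        rw [pow_succ, pow_mul]; push_cast; ring_nf

theorem stmt_13 (n : ℕ) (hn : 1 ≤ n) :
    (n.choose (n / 2) : ℝ) ≤ 2 ^ n * Real.sqrt (2 / (Real.pi * n)) := by
  have hπ : (0:ℝ) < Real.pi := Real.pi_pos
  rcases Nat.even_or_odd n with ⟨m, rfl⟩ | ⟨m, rfl⟩
  · have hm : 1 ≤ m := by omega
    have hm0 : (0:ℝ) < m := by exact_mod_cast hm
    have h1 : (m + m) / 2 = m := by omega
    have h2 : m + m = 2 * m := by omega
    rw [h1, h2]
    have h3 : (2:ℝ) / (Real.pi * ((2 * m : ℕ) : ℝ)) = (Real.pi * m)⁻¹ := by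
      push_cast
      field_simp
    rw [h3, Real.sqrt_inv]
    have h4 : (2:ℝ) ^ (2 * m) = 4 ^ m := by rw [pow_mul]; norm_num
    rw [h4]
    calc ((2 * m).choose m : ℝ) ≤ 4 ^ m / Real.sqrt (Real.pi * m) := central_le m hm
      _ = 4 ^ m * (Real.sqrt (Real.pi * m))⁻¹ := by rw [div_eq_mul_inv]
  · rcases Nat.eq_zero_or_pos m with rfl | hm
    · have hs : (1:ℝ)/2 ≤ Real.sqrt (2 / Real.pi) := by
        rw [Real.le_sqrt (by norm_num) (by positivity)]
        rw [div_pow, div_le_div_iff₀ (by norm_num) hπ]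
        linarith [Real.pi_le_four]
      calc ((2*0+1).choose ((2*0+1)/2) : ℝ) = 1 := by norm_num
        _ ≤ 2 * Real.sqrt (2/Real.pi) := by linarith
        _ = 2^(2*0+1) * Real.sqrt (2/(Real.pi * ((2*0+1:ℕ):ℝ))) := by norm_num
    · have h1 : (2 * m + 1) / 2 = m := by omega
      rw [h1]
      have := odd_le m hm
      convert this using 3 <;> push_cast <;> ring
end

section
/- Let 0 < δ < 1/(4√n) and let τ be a product distribution over {0,1}ⁿ such that |Pr_τ[xᵢ = 1] − 1/2| > δ for every i ∈ [n]. Then for all sufficiently large n, d_TV(τ, πₙ) ≥ δ√n/16, where πₙ is the uniform distribution on {0,1}ⁿ. -/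
/-- The product distribution over `{0,1}ⁿ` with marginal probabilities `p i` of drawing 1. -/
noncomputable def prodDist (n : ℕ) (p : Fin n → ℝ) : (Fin n → Bool) → ℝ :=
  fun y => ∏ i, if y i then p i else 1 - p i

/-!
Flipping the coordinates with `p i < 1/2` does not change the distance to the uniform
distribution, so we may assume `p i ≥ 1/2 + δ` for all `i`. Testing against the majority event
`A = {more than n/2 ones}` gives `d_TV ≥ τ(A) - π(A)`. Since `A` is an up-set, `τ(A)` is at least
`F(1/2 + δ)`, where `F(q) = Pr[Bin(n, q) > n/2]`, while `π(A) = F(1/2)`. The derivative of `F` is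
`n * C(n-1, ⌊n/2⌋) * q^⌊n/2⌋ * (1-q)^(⌈n/2⌉-1)`; on `[1/2, 1/2 + δ]` the power factor is at least
`(3/4) / 2^(n-1)` because `16 n δ² ≤ 1`, and `C(n-1, ⌊n/2⌋) ≥ 2^(n-1) / (2√n)`, so `F' ≥ (3/8) √n`.
-/

open Finset Polynomial

section Cube

variable {n : ℕ}

lemma prodDist_nonneg {p : Fin n → ℝ} (hp : ∀ i, 0 ≤ p i ∧ p i ≤ 1) (y : Fin n → Bool) :
    0 ≤ prodDist n p y :=
  prod_nonneg fun i _ => by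
    cases y i
    · simpa using (hp i).2
    · simpa using (hp i).1

lemma sum_prodDist (p : Fin n → ℝ) : ∑ y, prodDist n p y = 1 := by
  simp [prodDist, ← Fintype.prod_sum (fun i (b : Bool) => if b then p i else 1 - p i)]

lemma prodDist_xor (p : Fin n → ℝ) (s : Fin n → Prop) [DecidablePred s] (y : Fin n → Bool) :
    prodDist n p (fun i => xor (decide (s i)) (y i)) =
      prodDist n (fun i => if s i then 1 - p i else p i) y :=
  prod_congr rfl fun i _ => by by_cases hs : s i <;> cases hy : y i <;> simp [hs, hy]

lemma sum_comp_prodDist_flip {M : Type*} [AddCommMonoid M] (F : ℝ → M) (p : Fin n → ℝ)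
    (s : Fin n → Prop) [DecidablePred s] :
    ∑ y, F (prodDist n (fun i => if s i then 1 - p i else p i) y) = ∑ y, F (prodDist n p y) := by
  let e : Equiv.Perm (Fin n → Bool) :=
    Function.Involutive.toPerm (fun y i => xor (decide (s i)) (y i)) fun y => by funext i; simp
  simp only [← prodDist_xor]
  exact Equiv.sum_comp e (fun y => F (prodDist n p y))

def numTrue (y : Fin n → Bool) : ℕ := (univ.filter fun i => y i = true).card

lemma numTrue_mono : Monotone (numTrue (n := n)) := fun y _ hyz =>
  card_le_card <| monotone_filter_right _ fun i _ (h : y i = true) =>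
    top_unique (h.symm.trans_le (hyz i))

lemma monotone_indicator_le_numTrue (t : ℕ) :
    Monotone fun y : Fin n → Bool => if t ≤ numTrue y then (1 : ℝ) else 0 := fun y z hyz => by
  have hyz' := numTrue_mono hyz
  dsimp only
  split_ifs with hy hz <;> first | exact absurd (hy.trans hyz') hz | norm_num

lemma prodDist_const (q : ℝ) (y : Fin n → Bool) :
    prodDist n (fun _ => q) y = q ^ numTrue y * (1 - q) ^ (n - numTrue y) := by
  have hcard := card_filter_add_card_filter_not (s := univ) (p := fun i : Fin n => y i = true)
  rw [card_univ, Fintype.card_fin] at hcard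
  rw [prodDist, prod_ite, prod_const, prod_const, numTrue]
  congr 2
  omega

lemma prodDist_half (y : Fin n → Bool) : prodDist n (fun _ => 1 / 2) y = (1 / 2) ^ n := by
  rw [one_div_pow]
  norm_num [prodDist]

lemma sum_comp_numTrue {M : Type*} [AddCommMonoid M] (f : ℕ → M) :
    ∑ y : Fin n → Bool, f (numTrue y) = ∑ s ∈ range (n + 1), n.choose s • f s := by
  let e : Finset (Fin n) ≃ (Fin n → Bool) :=
    { toFun := fun S i => decide (i ∈ S)
      invFun := fun y => univ.filter fun i => y i = true
      left_inv := fun S => by ext; simp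
      right_inv := fun y => by funext i; simp }
  rw [← Equiv.sum_comp e]
  have hcard (S : Finset (Fin n)) : numTrue (e S) = S.card := by simp [numTrue, e]
  simp only [hcard]
  rw [← powerset_univ, sum_powerset_apply_card, card_univ, Fintype.card_fin]

end Cube

lemma sum_prodDist_mul_succ {n : ℕ} (p : Fin (n + 1) → ℝ) (g : (Fin (n + 1) → Bool) → ℝ) :
    ∑ y, prodDist (n + 1) p y * g y =
      p 0 * ∑ y, prodDist n (Fin.tail p) y * g (Fin.cons true y) +
        (1 - p 0) * ∑ y, prodDist n (Fin.tail p) y * g (Fin.cons false y) := by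
  rw [← Equiv.sum_comp (Fin.consEquiv fun _ => Bool), Fintype.sum_prod_type, Fintype.sum_bool]
  simp [Fin.consEquiv, prodDist, Fin.prod_univ_succ, Fin.tail, mul_sum, mul_assoc]

theorem sum_prodDist_mul_le_of_monotone {n : ℕ} {g : (Fin n → Bool) → ℝ} (hg : Monotone g)
    {p q : Fin n → ℝ} (hpq : p ≤ q) (hp : ∀ i, 0 ≤ p i) (hq : ∀ i, q i ≤ 1) :
    ∑ y, prodDist n p y * g y ≤ ∑ y, prodDist n q y * g y := by
  induction n with
  | zero => simp [prodDist]
  | succ n ih =>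
    have hcons (b : Bool) : Monotone fun y => g (Fin.cons b y) :=
      fun y z hyz => hg (Fin.cons_le_cons.2 ⟨le_rfl, hyz⟩)
    have htail (b : Bool) : ∑ y, prodDist n (Fin.tail p) y * g (Fin.cons b y) ≤
        ∑ y, prodDist n (Fin.tail q) y * g (Fin.cons b y) :=
      ih (hcons b) (fun i => hpq i.succ) (fun i => hp i.succ) fun i => hq i.succ
    have hfalse_le_true : ∑ y, prodDist n (Fin.tail q) y * g (Fin.cons false y) ≤
        ∑ y, prodDist n (Fin.tail q) y * g (Fin.cons true y) :=
      sum_le_sum fun y _ => mul_le_mul_of_nonneg_left (hg (Fin.cons_le_cons.2 ⟨by decide, le_rfl⟩))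
        (prodDist_nonneg (fun i => ⟨(hp i.succ).trans (hpq i.succ), hq i.succ⟩) y)
    rw [sum_prodDist_mul_succ, sum_prodDist_mul_succ]
    linarith [mul_le_mul_of_nonneg_left (htail true) (hp 0),
      mul_le_mul_of_nonneg_left (htail false) (sub_nonneg.2 ((hpq 0).trans (hq 0))),
      mul_le_mul_of_nonneg_left hfalse_le_true (sub_nonneg.2 (hpq 0))]

lemma sum_sub_mul_le_half_sum_abs {ι : Type*} [Fintype ι] {a b g : ι → ℝ}
    (hab : ∑ i, a i = ∑ i, b i) (hg : ∀ i, 0 ≤ g i ∧ g i ≤ 1) :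
    ∑ i, (a i - b i) * g i ≤ 1 / 2 * ∑ i, |a i - b i| := by
  have hpos_part (i : ι) : (a i - b i) * g i ≤ (|a i - b i| + (a i - b i)) / 2 := by
    rcases le_total 0 (a i - b i) with h | h
    · rw [abs_of_nonneg h]; nlinarith [hg i]
    · rw [abs_of_nonpos h]; nlinarith [hg i]
  calc ∑ i, (a i - b i) * g i ≤ ∑ i, (|a i - b i| + (a i - b i)) / 2 :=
        sum_le_sum fun i _ => hpos_part i
    _ = 1 / 2 * ∑ i, |a i - b i| := by
      rw [← sum_div, sum_add_distrib, sum_sub_distrib, hab]; ring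

/-- `(binomialTail n t).eval q = Pr[Bin(n, q) ≥ t]`. -/
noncomputable def binomialTail (n t : ℕ) : ℝ[X] :=
  ∑ s ∈ Ico t (n + 1), bernsteinPolynomial ℝ n s

lemma sum_prodDist_const_mul_indicator (n t : ℕ) (q : ℝ) :
    ∑ y, prodDist n (fun _ => q) y * (if t ≤ numTrue y then 1 else 0) =
      (binomialTail n t).eval q := by
  simp only [prodDist_const]
  rw [sum_comp_numTrue fun s => q ^ s * (1 - q) ^ (n - s) * if t ≤ s then 1 else 0,
    binomialTail, eval_finsetSum, range_eq_Ico, ← Ico_filter_le_of_left_le (Nat.zero_le t),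
    sum_filter]
  refine sum_congr rfl fun s _ => ?_
  split_ifs <;> simp [bernsteinPolynomial, mul_assoc]

lemma derivative_binomialTail (n k : ℕ) :
    derivative (binomialTail (n + 1) (k + 1)) = (n + 1) * bernsteinPolynomial ℝ n k := by
  rcases le_or_gt k (n + 1) with hk | hk
  · rw [binomialTail, ← sum_Ico_add' (c := 1), derivative_sum]
    simp only [bernsteinPolynomial.derivative_succ_aux, ← mul_sum]
    have htelescope := sum_Ico_sub (fun i => bernsteinPolynomial ℝ n i) hk
    rw [bernsteinPolynomial.eq_zero_of_lt ℝ n.lt_succ_self, sum_sub_distrib] at htelescope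
    rw [sum_sub_distrib]
    linear_combination (-(n + 1 : ℝ[X])) * htelescope
  · simp [binomialTail, bernsteinPolynomial.eq_zero_of_lt ℝ (by omega : n < k),
      Ico_eq_empty_of_le (by omega : n + 1 + 1 ≤ k + 1)]

lemma sixteen_pow_le_mul_centralBinom_sq (k : ℕ) : 16 ^ k ≤ (4 * k + 1) * k.centralBinom ^ 2 := by
  induction k with
  | zero => simp
  | succ k ih =>
    have hrec := Nat.succ_mul_centralBinom_succ k
    refine Nat.le_of_mul_le_mul_left (c := (k + 1) ^ 2) ?_ (by positivity)
    calc (k + 1) ^ 2 * 16 ^ (k + 1) = 16 * (k + 1) ^ 2 * 16 ^ k := by ring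
      _ ≤ 16 * (k + 1) ^ 2 * ((4 * k + 1) * k.centralBinom ^ 2) := Nat.mul_le_mul_left _ ih
      _ ≤ (4 * k + 5) * (2 * (2 * k + 1) * k.centralBinom) ^ 2 := by
          rw [mul_pow]; nlinarith [Nat.zero_le (k.centralBinom ^ 2)]
      _ = (k + 1) ^ 2 * ((4 * (k + 1) + 1) * (k + 1).centralBinom ^ 2) := by
          rw [← hrec]; ring

lemma four_pow_le_mul_choose_sq (m : ℕ) : 4 ^ m ≤ 4 * (m + 1) * m.choose ((m + 1) / 2) ^ 2 := by
  obtain ⟨k, rfl | rfl⟩ := Nat.even_or_odd' m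
  · have h16 := sixteen_pow_le_mul_centralBinom_sq k
    rw [show (2 * k + 1) / 2 = k by omega, ← Nat.centralBinom_eq_two_mul_choose,
      show 4 ^ (2 * k) = 16 ^ k by rw [pow_mul]; norm_num]
    nlinarith [h16]
  · have hhalf : (k + 1).centralBinom = 2 * (2 * k + 1).choose (k + 1) := by
      rw [Nat.centralBinom_eq_two_mul_choose, show 2 * (k + 1) = 2 * k + 1 + 1 by ring,
        Nat.choose_succ_succ, Nat.choose_symm_half]
      ring
    have h16 := sixteen_pow_le_mul_centralBinom_sq (k + 1)
    rw [hhalf, show 16 ^ (k + 1) = 4 * 4 ^ (2 * k + 1) by rw [pow_succ, pow_succ, pow_mul]; ring]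
      at h16
    rw [show (2 * k + 1 + 1) / 2 = k + 1 by omega]
    nlinarith [h16]

lemma two_pow_le_mul_sqrt_mul_choose (m : ℕ) :
    (2 : ℝ) ^ m ≤ 2 * √(m + 1) * m.choose ((m + 1) / 2) := by
  refine (pow_le_pow_iff_left₀ (by positivity) (by positivity) two_ne_zero).1 ?_
  rw [mul_pow, mul_pow, Real.sq_sqrt (by positivity), ← pow_mul, mul_comm m, pow_mul]
  exact_mod_cast (by norm_num; exact four_pow_le_mul_choose_sq m :
    (2 ^ 2) ^ m ≤ 2 ^ 2 * (m + 1) * m.choose ((m + 1) / 2) ^ 2)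

lemma one_sub_mul_sq_le_pow_mul_pow {x : ℝ} (hx : 1 / 2 ≤ x) (hx1 : x ≤ 1) {j k : ℕ}
    (hjk : j ≤ k) : 1 - j * (2 * x - 1) ^ 2 ≤ (2 * x) ^ k * (2 * (1 - x)) ^ j :=
  calc 1 - j * (2 * x - 1) ^ 2 ≤ (1 - (2 * x - 1) ^ 2) ^ j := by
        have hbernoulli := one_add_mul_le_pow (a := -(2 * x - 1) ^ 2) (by nlinarith) j
        rwa [mul_neg, ← sub_eq_add_neg, ← sub_eq_add_neg] at hbernoulli
    _ = (2 * x) ^ j * (2 * (1 - x)) ^ j := by rw [← mul_pow]; ring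
    _ ≤ (2 * x) ^ k * (2 * (1 - x)) ^ j := by
        gcongr
        linarith

lemma le_eval_bernsteinPolynomial {m k : ℕ} (hkm : k ≤ m) (hmk : m ≤ 2 * k) {x : ℝ}
    (hx : 1 / 2 ≤ x) (hx1 : x ≤ 1) :
    m.choose k / 2 ^ m * (1 - (m - k : ℕ) * (2 * x - 1) ^ 2) ≤
      (bernsteinPolynomial ℝ m k).eval x := by
  have hsplit : (bernsteinPolynomial ℝ m k).eval x =
      m.choose k / 2 ^ m * ((2 * x) ^ k * (2 * (1 - x)) ^ (m - k)) := by
    rw [mul_pow, mul_pow, mul_mul_mul_comm, ← pow_add, Nat.add_sub_cancel' hkm]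
    simp [bernsteinPolynomial]
    field_simp
  rw [hsplit]
  exact mul_le_mul_of_nonneg_left (one_sub_mul_sq_le_pow_mul_pow hx hx1 (by omega)) (by positivity)

lemma mul_sqrt_le_mul_eval_bernsteinPolynomial {m : ℕ} {x : ℝ} (hx : 1 / 2 ≤ x) (hx1 : x ≤ 1)
    (hmx : 4 * (m + 1) * (2 * x - 1) ^ 2 ≤ 1) :
    3 / 8 * √(m + 1 : ℝ) ≤ (m + 1) * (bernsteinPolynomial ℝ m ((m + 1) / 2)).eval x := by
  set k := (m + 1) / 2
  have hchoose : 1 / (2 * √(m + 1 : ℝ)) ≤ m.choose k / 2 ^ m := by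
    rw [div_le_div_iff₀ (by positivity) (by positivity)]
    simpa [mul_comm] using two_pow_le_mul_sqrt_mul_choose m
  have hdev : ((m - k : ℕ) : ℝ) * (2 * x - 1) ^ 2 ≤ 1 / 4 := by
    have hmk : ((m - k : ℕ) : ℝ) ≤ m + 1 := by norm_cast; omega
    nlinarith [mul_le_mul_of_nonneg_right hmk (sq_nonneg (2 * x - 1))]
  calc 3 / 8 * √(m + 1 : ℝ) = (m + 1) * (1 / (2 * √(m + 1 : ℝ)) * (3 / 4)) := by
        field_simp; rw [Real.sq_sqrt (by positivity)]; ring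
    _ ≤ (m + 1) * (m.choose k / 2 ^ m * (1 - (m - k : ℕ) * (2 * x - 1) ^ 2)) := by
        gcongr; linarith
    _ ≤ (m + 1) * (bernsteinPolynomial ℝ m k).eval x := by
        gcongr
        exact le_eval_bernsteinPolynomial (by omega) (by omega) hx hx1

theorem mul_sqrt_le_binomialTail_sub {n : ℕ} (hn : 0 < n) {δ : ℝ} (hδ : 0 ≤ δ)
    (hnδ : 16 * n * δ ^ 2 ≤ 1) :
    3 / 8 * √n * δ ≤
      (binomialTail n (n / 2 + 1)).eval (1 / 2 + δ) -
        (binomialTail n (n / 2 + 1)).eval (1 / 2) := by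
  obtain ⟨m, rfl⟩ := Nat.exists_eq_add_one_of_ne_zero hn.ne'
  push_cast at hnδ ⊢
  have hderiv (x : ℝ) (hx : x ∈ Set.Ioo (1 / 2) (1 / 2 + δ)) :
      3 / 8 * √(m + 1 : ℝ) ≤
        deriv (fun x => (binomialTail (m + 1) ((m + 1) / 2 + 1)).eval x) x := by
    have hdev : (2 * x - 1) ^ 2 ≤ 4 * δ ^ 2 := by nlinarith [hx.1, hx.2]
    rw [Polynomial.deriv, derivative_binomialTail, eval_mul]
    simp only [eval_add, eval_natCast, eval_one]
    exact mul_sqrt_le_mul_eval_bernsteinPolynomial hx.1.le (by nlinarith [hx.2])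
      (by nlinarith [mul_le_mul_of_nonneg_left hdev (by positivity : (0 : ℝ) ≤ 4 * (m + 1))])
  have := (convex_Icc (1 / 2 : ℝ) (1 / 2 + δ)).mul_sub_le_image_sub_of_le_deriv
    (Polynomial.continuousOn _) (Polynomial.differentiableOn _) (by rwa [interior_Icc])
    (1 / 2) (by simp; linarith) (1 / 2 + δ) (by simp; linarith) (by linarith)
  simpa using this

lemma sixteen_mul_mul_sq_le_one {n : ℕ} (hn : 0 < n) {δ : ℝ} (hδ : 0 ≤ δ)
    (hδn : δ < 1 / (4 * √n)) : 16 * n * δ ^ 2 ≤ 1 := by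
  rw [lt_div_iff₀ (by positivity)] at hδn
  have hsq : (δ * (4 * √n)) ^ 2 ≤ 1 := by nlinarith [mul_nonneg hδ (Real.sqrt_nonneg n)]
  rw [mul_pow, mul_pow, Real.sq_sqrt (Nat.cast_nonneg n)] at hsq
  linarith

lemma half_add_le_flip {x δ : ℝ} (hx : 0 ≤ x ∧ x ≤ 1) (h : δ < |x - 1 / 2|) :
    1 / 2 + δ ≤ (if x < 1 / 2 then 1 - x else x) ∧ (if x < 1 / 2 then 1 - x else x) ≤ 1 := by
  split_ifs with hlt
  · rw [abs_of_neg (by linarith)] at h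
    constructor <;> linarith
  · rw [abs_of_nonneg (by linarith)] at h
    constructor <;> linarith

theorem stmt_14_general (n : ℕ) (δ : ℝ) (p : Fin n → ℝ)
    (hδ0 : 0 < δ) (hδ1 : δ < 1 / (4 * Real.sqrt n))
    (hp : ∀ i, 0 ≤ p i ∧ p i ≤ 1)
    (hbias : ∀ i, δ < |p i - 1 / 2|) :
    (1 / 2) * ∑ y, |prodDist n p y - (1 / 2 : ℝ) ^ n| ≥ δ * Real.sqrt n / 16 := by
  rcases Nat.eq_zero_or_pos n with rfl | hn
  · simp
  let P : Fin n → ℝ := fun i => if p i < 1 / 2 then 1 - p i else p i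
  have hP (i : Fin n) : 1 / 2 + δ ≤ P i ∧ P i ≤ 1 := half_add_le_flip (hp i) (hbias i)
  let g : (Fin n → Bool) → ℝ := fun y => if n / 2 + 1 ≤ numTrue y then 1 else 0
  calc δ * √n / 16 ≤ 3 / 8 * √n * δ := by nlinarith [Real.sqrt_nonneg n]
    _ ≤ (binomialTail n (n / 2 + 1)).eval (1 / 2 + δ) - (binomialTail n (n / 2 + 1)).eval (1 / 2) :=
      mul_sqrt_le_binomialTail_sub hn hδ0.le (sixteen_mul_mul_sq_le_one hn hδ0.le hδ1)
    _ = ∑ y, (prodDist n (fun _ => 1 / 2 + δ) y - prodDist n (fun _ => 1 / 2) y) * g y := by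
      simp only [sub_mul, sum_sub_distrib, g, sum_prodDist_const_mul_indicator]
    _ ≤ ∑ y, (prodDist n P y - prodDist n (fun _ => 1 / 2) y) * g y := by
      simp only [sub_mul, sum_sub_distrib]
      gcongr ?_ - _
      exact sum_prodDist_mul_le_of_monotone (monotone_indicator_le_numTrue _)
        (fun i => (hP i).1) (fun _ => by linarith) fun i => (hP i).2
    _ ≤ 1 / 2 * ∑ y, |prodDist n P y - prodDist n (fun _ => 1 / 2) y| :=
      sum_sub_mul_le_half_sum_abs (by rw [sum_prodDist, sum_prodDist]) fun y => by
        dsimp only [g]; split_ifs <;> norm_num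
    _ = 1 / 2 * ∑ y, |prodDist n p y - (1 / 2) ^ n| := by
      simp only [prodDist_half, P]
      rw [sum_comp_prodDist_flip (fun r => |r - (1 / 2 : ℝ) ^ n|) p fun i => p i < 1 / 2]

theorem stmt_14 (n : ℕ) (hn : 70 ≤ n) (δ : ℝ) (p : Fin n → ℝ)
    (hδ0 : 0 < δ) (hδ1 : δ < 1 / (4 * Real.sqrt n))
    (hp : ∀ i, 0 ≤ p i ∧ p i ≤ 1)
    (hbias : ∀ i, δ < |p i - 1 / 2|) :
    (1 / 2) * ∑ y, |prodDist n p y - (1 / 2 : ℝ) ^ n| ≥ δ * Real.sqrt n / 16 :=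
  stmt_14_general n δ p hδ0 hδ1 hp hbias
end

section
/- Let τ' be the product distribution on {0,1}ⁿ where each bit is Ber((1+δ)/2), with 0 < δ < 1/(4√n). For any y ∈ {0,1}ⁿ with C₁(y) ≥ n/2 + √n/4, the likelihood ratio satisfies τ'(y)/πₙ(y) ≥ 1 + δ√n/4. -/
/-!
Writing `k = C₁(y)` and `m = n - k`, the likelihood ratio is `(1 + δ)^k (1 - δ)^m
= (1 - δ²)^m (1 + δ)^(k - m)`. Bernoulli's inequality bounds this below by
`(1 - m δ²)(1 + (k - m) δ)`, and with `s = δ √n < 1/4` the counting hypothesis gives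
`m δ² ≤ s²/2` and `(k - m) δ ≥ s/2`, so the product is at least `(1 - s²/2)(1 + s/2) ≥ 1 + s/4`.
-/

/-- Number of ones in a binary string. -/
def ones (n : ℕ) (y : Fin n → Bool) : ℕ := (Finset.univ.filter fun i => y i = true).card

lemma ones_le (n : ℕ) (y : Fin n → Bool) : ones n y ≤ n := by
  simpa [ones] using Finset.card_filter_le (Finset.univ : Finset (Fin n)) fun i => y i = true

lemma biased_div_uniform_pow {a b n : ℕ} (hab : a + b = n) (δ : ℝ) :
    ((1 + δ) / 2) ^ a * ((1 - δ) / 2) ^ b / (1 / 2 : ℝ) ^ n = (1 + δ) ^ a * (1 - δ) ^ b := by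
  subst hab
  rw [div_eq_iff (by positivity)]
  simp only [div_pow, one_pow, pow_add]
  field_simp

lemma one_sub_mul_sq_mul_one_add_mul_le {δ : ℝ} (hδ0 : 0 ≤ δ) (hδ1 : δ ≤ 1) {k m : ℕ}
    (hmk : m ≤ k) :
    (1 - m * δ ^ 2) * (1 + (k - m : ℝ) * δ) ≤ (1 + δ) ^ k * (1 - δ) ^ m := by
  obtain ⟨p, rfl⟩ := Nat.exists_eq_add_of_le hmk
  have hsplit : (1 + δ) ^ (m + p) * (1 - δ) ^ m = (1 - δ ^ 2) ^ m * (1 + δ) ^ p := by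
    rw [pow_add, show (1 - δ ^ 2 : ℝ) = (1 + δ) * (1 - δ) by ring, mul_pow]
    ring
  have hsq : 1 - m * δ ^ 2 ≤ (1 - δ ^ 2) ^ m := by
    simpa [sub_eq_add_neg] using one_add_mul_le_pow (a := -δ ^ 2) (by nlinarith) m
  have hlin : 1 + p * δ ≤ (1 + δ) ^ p := one_add_mul_le_pow (by linarith) p
  push_cast
  rw [hsplit, add_sub_cancel_left]
  rcases le_total 0 (1 - m * δ ^ 2) with hA | hA
  · exact mul_le_mul hsq hlin (by positivity) (hA.trans hsq)
  · calc (1 - m * δ ^ 2) * (1 + p * δ) ≤ 0 :=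
          mul_nonpos_of_nonpos_of_nonneg hA (by positivity)
      _ ≤ _ := mul_nonneg (pow_nonneg (by nlinarith) m) (by positivity)

lemma one_add_div_four_le_one_sub_mul_one_add {s A B : ℝ} (hs0 : 0 ≤ s) (hs1 : s < 1 / 4)
    (hA : A ≤ s ^ 2 / 2) (hB : s / 2 ≤ B) :
    1 + s / 4 ≤ (1 - A) * (1 + B) := by
  have hA0 : 0 ≤ 1 - A := by nlinarith
  calc 1 + s / 4 ≤ (1 - s ^ 2 / 2) * (1 + s / 2) := by nlinarith
    _ ≤ (1 - A) * (1 + B) := by gcongr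

theorem stmt_15 (n : ℕ) (δ : ℝ) (hδ0 : 0 < δ) (hδ1 : δ < 1 / (4 * Real.sqrt n))
    (y : Fin n → Bool) (hy : (n : ℝ) / 2 + Real.sqrt n / 4 ≤ (ones n y : ℝ)) :
    ((1 + δ) / 2) ^ (ones n y) * ((1 - δ) / 2) ^ (n - ones n y) / ((1 / 2 : ℝ) ^ n)
      ≥ 1 + δ * Real.sqrt n / 4 := by
  set k := ones n y
  have hkn : k ≤ n := ones_le n y
  have hsqrt : 0 < Real.sqrt n := by
    rcases n.eq_zero_or_pos with rfl | hn
    · simp at hδ1; linarith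
    · positivity
  have hsq : Real.sqrt n ^ 2 = n := Real.sq_sqrt n.cast_nonneg
  have hs : δ * Real.sqrt n < 1 / 4 := by
    rw [lt_div_iff₀ (by positivity)] at hδ1
    linarith
  have hm : ((n - k : ℕ) : ℝ) = n - k := Nat.cast_sub hkn
  have hA : ((n - k : ℕ) : ℝ) * δ ^ 2 ≤ (δ * Real.sqrt n) ^ 2 / 2 := by rw [hm]; nlinarith
  have hB : δ * Real.sqrt n / 2 ≤ (k - ((n - k : ℕ) : ℝ)) * δ := by rw [hm]; nlinarith
  have hmk : n - k ≤ k := by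
    have : n ≤ 2 * k := by exact_mod_cast (by linarith : (n : ℝ) ≤ 2 * k)
    omega
  rw [biased_div_uniform_pow (Nat.add_sub_cancel' hkn), ge_iff_le]
  calc 1 + δ * Real.sqrt n / 4
      ≤ (1 - ((n - k : ℕ) : ℝ) * δ ^ 2) * (1 + (k - ((n - k : ℕ) : ℝ)) * δ) :=
        one_add_div_four_le_one_sub_mul_one_add (by positivity) hs hA hB
    _ ≤ (1 + δ) ^ k * (1 - δ) ^ (n - k) :=
        one_sub_mul_sq_mul_one_add_mul_le hδ0.le (by nlinarith) hmk
end
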